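/- arXiv:2210.02092 — 7 statements merged into one kernel-verified Lean document; each statement's English description precedes it below -/
import Mathlib

section
/- Under Assumption 1, for every 0 < λ < Δ/K² there exists a > 0 such that, with V(θ) := exp(a‖θ‖²), the drift inequality [Q(y)V](θ) := ∫_{ℝ^d} V(z) Q(y, θ, dz) ≤ γ·V(θ) + C holds for all θ ∈ ℝ^d and all y ∈ ℝ^m with ‖y‖ ≤ M, with some constants γ ∈ (0,1) and C ≥ 1. -/
open MeasureTheory ProbabilityTheory Filter Real
open scoped RealInnerProductSpace ENNReal

noncomputable section

/-- `ℝ^d` as Euclidean space. -/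
abbrev Ed (d : ℕ) : Type := EuclideanSpace ℝ (Fin d)

/-- The standard Gaussian measure on `ℝ^d` (mean `0`, identity covariance). -/
def stdGaussian (d : ℕ) : Measure (Ed d) :=
  (Measure.pi fun _ : Fin d => gaussianReal 0 1).map
    (MeasurableEquiv.toLp 2 (Fin d → ℝ))

/-- The SGLD parametric transition kernel
`Q(y, θ, A) = P(θ − λH(θ,y) + √(2λ)ξ₀ ∈ A)`, as a measure in its last argument. -/
def kernelQ {d m : ℕ} (H : Ed d → Ed m → Ed d) (lam : ℝ) (y : Ed m) (θ : Ed d) :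
    Measure (Ed d) :=
  (stdGaussian d).map (fun z => θ - lam • H θ y + (Real.sqrt (2 * lam)) • z)

/-!
Under `Q(y, θ)` the new point is Gaussian with mean `μ = θ - λ H(θ, y)` and variance `2λ` in
each coordinate, so the exponential moment is explicit:
`∫ exp(a‖z‖²) dQ = (1 - 4aλ)^(-d/2) exp(a‖μ‖² / (1 - 4aλ))`.
Dissipativity and linear growth give `‖μ‖² ≤ ρ‖θ‖² + B` with `ρ = 1 - 2λ(Δ - λK²) < 1`; for small
`a` the exponent `a‖θ‖² ρ / (1 - 4aλ)` still grows strictly slower than `a‖θ‖²`, and the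
difference absorbs every constant factor once `‖θ‖` is large.
-/

theorem lintegral_exp_mul_sq_affine_gaussianReal {a σ : ℝ} (h : 2 * a * σ ^ 2 < 1) (c : ℝ) :
    ∫⁻ x, ENNReal.ofReal (exp (a * (c + σ * x) ^ 2)) ∂gaussianReal 0 1
      = ENNReal.ofReal ((√(1 - 2 * a * σ ^ 2))⁻¹ * exp (a * c ^ 2 / (1 - 2 * a * σ ^ 2))) := by
  set β := 1 - 2 * a * σ ^ 2 with hβ
  have hβ0 : 0 < β := by linarith
  set s := 2 * a * c * σ / β
  have hdens : ∀ x, gaussianPDFReal 0 1 x * exp (a * (c + σ * x) ^ 2)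
      = (√(2 * π))⁻¹ * exp (a * c ^ 2 / β) * exp (-(β / 2) * (x - s) ^ 2) := by
    intro x
    simp only [gaussianPDFReal, NNReal.coe_one, mul_one, sub_zero, mul_assoc, ← exp_add]
    congr 2
    simp only [s]
    field_simp
    rw [hβ]
    ring
  have hint : Integrable fun x => exp (-(β / 2) * (x - s) ^ 2) :=
    (integrable_exp_neg_mul_sq (by positivity)).comp_sub_right s
  rw [gaussianReal_of_var_ne_zero _ one_ne_zero,
    lintegral_withDensity_eq_lintegral_mul₀ (measurable_gaussianPDF _ _).aemeasurable
      (by fun_prop)]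
  simp only [Pi.mul_apply, gaussianPDF, ← ENNReal.ofReal_mul (gaussianPDFReal_nonneg _ _ _),
    hdens]
  rw [← ofReal_integral_eq_lintegral_ofReal (hint.const_mul _)
    (ae_of_all _ fun _ => by positivity), integral_const_mul,
    integral_sub_right_eq_self (fun x => exp (-(β / 2) * x ^ 2)), integral_gaussian]
  congr 1
  have : √(2 * π) = √β * √(π / (β / 2)) := by
    rw [← sqrt_mul hβ0.le]; congr 1; field_simp
  rw [this]
  field_simp

theorem lintegral_fintype_prod_eq_prod {ι : Type*} [Fintype ι] {Ω : ι → Type*}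
    [∀ i, MeasurableSpace (Ω i)] (μ : ∀ i, Measure (Ω i)) [∀ i, IsProbabilityMeasure (μ i)]
    {f : ∀ i, Ω i → ℝ≥0∞} (hf : ∀ i, Measurable (f i)) :
    ∫⁻ x, ∏ i, f i (x i) ∂Measure.pi μ = ∏ i, ∫⁻ y, f i y ∂μ i := by
  rw [lintegral_prod_eq_prod_lintegral_of_indepFun _ _
    (iIndepFun_pi fun i => (hf i).aemeasurable) fun i => (hf i).comp (measurable_pi_apply i)]
  exact Finset.prod_congr rfl fun i _ => (measurePreserving_eval μ i).lintegral_comp (hf i)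

theorem lintegral_exp_mul_sq_norm_affine_stdGaussian {d : ℕ} {a σ : ℝ}
    (h : 2 * a * σ ^ 2 < 1) (μ : Ed d) :
    ∫⁻ z, ENNReal.ofReal (exp (a * ‖μ + σ • z‖ ^ 2)) ∂_root_.stdGaussian d
      = ENNReal.ofReal ((√(1 - 2 * a * σ ^ 2))⁻¹ ^ d
          * exp (a * ‖μ‖ ^ 2 / (1 - 2 * a * σ ^ 2))) := by
  have hcoord : ∀ v : Ed d, a * ‖v‖ ^ 2 = ∑ i, a * v i ^ 2 := fun v => by
    simp only [EuclideanSpace.norm_sq_eq, Real.norm_eq_abs, sq_abs, Finset.mul_sum]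
  have hfactor : ∀ x : Fin d → ℝ,
      ENNReal.ofReal (exp (a * ‖μ + σ • MeasurableEquiv.toLp 2 (Fin d → ℝ) x‖ ^ 2))
        = ∏ i, ENNReal.ofReal (exp (a * (μ i + σ * x i) ^ 2)) := fun x => by
    rw [hcoord, exp_sum, ENNReal.ofReal_prod_of_nonneg fun i _ => (exp_pos _).le]
    rfl
  rw [_root_.stdGaussian, lintegral_map (by fun_prop) (MeasurableEquiv.measurable _)]
  simp only [hfactor]
  rw [lintegral_fintype_prod_eq_prod _
    (f := fun i t => ENNReal.ofReal (exp (a * (μ i + σ * t) ^ 2))) fun i => by fun_prop]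
  simp only [lintegral_exp_mul_sq_affine_gaussianReal h]
  rw [← ENNReal.ofReal_prod_of_nonneg fun i _ => by positivity, Finset.prod_mul_distrib,
    Finset.prod_const, Finset.card_univ, Fintype.card_fin, ← exp_sum, ← Finset.sum_div,
    hcoord]

theorem exists_mul_exp_le_mul_exp_add {r E γ : ℝ} (hr : r < 1) (hE : 0 < E) (hγ : 0 < γ) :
    ∃ C, 1 ≤ C ∧ ∀ s, 0 ≤ s → E * exp (r * s) ≤ γ * exp s + C := by
  set T := max 0 (log (E / γ) / (1 - r))
  refine ⟨max 1 (E * exp T), le_max_left _ _, fun s hs => ?_⟩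
  rcases le_total s T with hsT | hTs
  · calc E * exp (r * s) ≤ E * exp T := by gcongr; nlinarith
      _ ≤ max 1 (E * exp T) := le_max_right _ _
      _ ≤ γ * exp s + max 1 (E * exp T) := le_add_of_nonneg_left (by positivity)
  · have hlog : log (E / γ) ≤ (1 - r) * s := by
      rw [← div_le_iff₀' (by linarith)]
      exact (le_max_right _ _).trans hTs
    calc E * exp (r * s) = γ * exp (log (E / γ)) * exp (r * s) := by
          rw [exp_log (by positivity)]; field_simp
      _ ≤ γ * exp ((1 - r) * s) * exp (r * s) := by gcongr
      _ = γ * exp s := by rw [mul_assoc, ← exp_add]; ring_nf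
      _ ≤ γ * exp s + max 1 (E * exp T) := le_add_of_nonneg_right (by positivity)

theorem norm_sub_smul_sq_le {F : Type*} [NormedAddCommGroup F] [InnerProductSpace ℝ F]
    {θ h : F} {lam Δ b K c : ℝ} (hlam : 0 ≤ lam) (hdis : Δ * ‖θ‖ ^ 2 - b ≤ ⟪h, θ⟫)
    (hlin : ‖h‖ ≤ K * (‖θ‖ + c)) :
    ‖θ - lam • h‖ ^ 2
      ≤ (1 - 2 * lam * (Δ - lam * K ^ 2)) * ‖θ‖ ^ 2
        + (2 * lam * b + 2 * lam ^ 2 * K ^ 2 * c ^ 2) := by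
  have hexpand : ‖θ - lam • h‖ ^ 2 = ‖θ‖ ^ 2 - 2 * lam * ⟪h, θ⟫ + lam ^ 2 * ‖h‖ ^ 2 := by
    rw [norm_sub_sq_real, real_inner_smul_right, norm_smul, mul_pow, Real.norm_eq_abs, sq_abs,
      real_inner_comm]
    ring
  have hsq : ‖h‖ ^ 2 ≤ 2 * K ^ 2 * (‖θ‖ ^ 2 + c ^ 2) :=
    calc ‖h‖ ^ 2 ≤ (K * (‖θ‖ + c)) ^ 2 := pow_le_pow_left₀ (norm_nonneg _) hlin 2
      _ ≤ 2 * K ^ 2 * (‖θ‖ ^ 2 + c ^ 2) := by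
          nlinarith [mul_nonneg (sq_nonneg K) (sq_nonneg (‖θ‖ - c))]
  rw [hexpand]
  nlinarith [mul_le_mul_of_nonneg_left hdis (by positivity : (0 : ℝ) ≤ 2 * lam),
    mul_le_mul_of_nonneg_left hsq (sq_nonneg lam)]

theorem exists_lintegral_exp_mul_sq_norm_affine_stdGaussian_le {d : ℕ} {ρ γ : ℝ} (hρ : ρ < 1)
    (hγ : 0 < γ) (B σ : ℝ) :
    ∃ a, 0 < a ∧ ∃ C, 1 ≤ C ∧ ∀ μ θ : Ed d, ‖μ‖ ^ 2 ≤ ρ * ‖θ‖ ^ 2 + B →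
      ∫⁻ z, ENNReal.ofReal (exp (a * ‖μ + σ • z‖ ^ 2)) ∂_root_.stdGaussian d
        ≤ ENNReal.ofReal (γ * exp (a * ‖θ‖ ^ 2) + C) := by
  -- `a` is chosen so that `β = 1 - 2aσ² > max ρ 0`: the Gaussian convolution divides the
  -- exponent by `β`, and `ρ / β < 1` keeps the drift contracting.
  set a := (1 - max ρ 0) / (4 * (σ ^ 2 + 1))
  have ha : 0 < a := div_pos (by simp [hρ]) (by positivity)
  set β := 1 - 2 * a * σ ^ 2
  have hβ : (1 + max ρ 0) / 2 ≤ β := by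
    have ha4 : a * (4 * (σ ^ 2 + 1)) = 1 - max ρ 0 := div_mul_cancel₀ _ (by positivity)
    linarith
  have hβ0 : 0 < β := by linarith [le_max_right ρ 0]
  have hρβ : ρ / β < 1 := (div_lt_one hβ0).mpr (by linarith [le_max_left ρ 0, max_lt hρ one_pos])
  obtain ⟨C, hC1, hC⟩ := exists_mul_exp_le_mul_exp_add hρβ
    (by positivity : 0 < (√β)⁻¹ ^ d * exp (a * B / β)) hγ
  refine ⟨a, ha, C, hC1, fun μ θ hμ => ?_⟩
  rw [lintegral_exp_mul_sq_norm_affine_stdGaussian (by linarith)]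
  gcongr
  have hexp : a * ‖μ‖ ^ 2 / β ≤ a * B / β + ρ / β * (a * ‖θ‖ ^ 2) :=
    calc a * ‖μ‖ ^ 2 / β ≤ a * (ρ * ‖θ‖ ^ 2 + B) / β := by gcongr
      _ = a * B / β + ρ / β * (a * ‖θ‖ ^ 2) := by ring
  calc (√β)⁻¹ ^ d * exp (a * ‖μ‖ ^ 2 / β)
      ≤ (√β)⁻¹ ^ d * exp (a * B / β + ρ / β * (a * ‖θ‖ ^ 2)) := by gcongr
    _ = (√β)⁻¹ ^ d * exp (a * B / β) * exp (ρ / β * (a * ‖θ‖ ^ 2)) := by rw [exp_add, mul_assoc]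
    _ ≤ γ * exp (a * ‖θ‖ ^ 2) + C := hC _ (by positivity)

theorem stmt3_general {d m : ℕ}
    (H : Ed d → Ed m → Ed d)
    (Δ b K M : ℝ)
    (hdis : ∀ (θ : Ed d) (y : Ed m), Δ * ‖θ‖ ^ 2 - b ≤ ⟪H θ y, θ⟫)
    (hlin : ∀ (θ : Ed d) (y : Ed m), ‖H θ y‖ ≤ K * (‖θ‖ + ‖y‖ + 1))
    (lam : ℝ) (hlam : 0 < lam) (hlam2 : lam < Δ / K ^ 2) :
    ∃ a : ℝ, 0 < a ∧ ∃ γ C : ℝ, γ ∈ Set.Ioo (0 : ℝ) 1 ∧ 1 ≤ C ∧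
      ∀ (θ : Ed d) (y : Ed m), ‖y‖ ≤ M →
        ∫⁻ z, ENNReal.ofReal (Real.exp (a * ‖z‖ ^ 2)) ∂(kernelQ H lam y θ)
          ≤ ENNReal.ofReal (γ * Real.exp (a * ‖θ‖ ^ 2) + C) := by
  have hlamK : lam * K ^ 2 < Δ := by
    rcases eq_or_ne K 0 with rfl | hK
    · -- `Δ / 0 = 0`, so `hlam2` contradicts `hlam`
      rw [zero_pow two_ne_zero, div_zero] at hlam2
      linarith
    · exact (lt_div_iff₀ (by positivity)).mp hlam2
  obtain ⟨a, ha, C, hC1, hdrift⟩ :=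
    exists_lintegral_exp_mul_sq_norm_affine_stdGaussian_le (d := d)
      (ρ := 1 - 2 * lam * (Δ - lam * K ^ 2)) (by nlinarith) (by norm_num : (0 : ℝ) < 1 / 2)
      (2 * lam * b + 2 * lam ^ 2 * K ^ 2 * (M + 1) ^ 2) (√(2 * lam))
  refine ⟨a, ha, 1 / 2, C, ⟨by norm_num, by norm_num⟩, hC1, fun θ y hy => ?_⟩
  rw [kernelQ, lintegral_map (by fun_prop) (by fun_prop)]
  refine hdrift _ _ ?_
  calc ‖θ - lam • H θ y‖ ^ 2
      ≤ (1 - 2 * lam * (Δ - lam * K ^ 2)) * ‖θ‖ ^ 2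
          + (2 * lam * b + 2 * lam ^ 2 * K ^ 2 * (‖y‖ + 1) ^ 2) :=
        norm_sub_smul_sq_le hlam.le (hdis θ y) ((hlin θ y).trans_eq (by ring))
    _ ≤ _ := by gcongr

/-- (Drift condition.) Under Assumption 1, for every `0 < λ < Δ/K²`
there exist `a > 0`, `γ ∈ (0,1)` and `C ≥ 1` such that with `V(θ) = exp(a‖θ‖²)`,
`[Q(y)V](θ) ≤ γ V(θ) + C` for all `θ` and all `‖y‖ ≤ M`. -/
theorem stmt3 {d m : ℕ}
    (H : Ed d → Ed m → Ed d) (hH : Measurable (Function.uncurry H))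
    (Δ b K M : ℝ)
    (hΔ : 0 < Δ) (hb : 0 < b)
    (hdis : ∀ (θ : Ed d) (y : Ed m), Δ * ‖θ‖ ^ 2 - b ≤ ⟪H θ y, θ⟫)
    (hK : Δ / Real.sqrt 2 < K)
    (hlin : ∀ (θ : Ed d) (y : Ed m), ‖H θ y‖ ≤ K * (‖θ‖ + ‖y‖ + 1))
    (hM : 0 < M)
    (lam : ℝ) (hlam : 0 < lam) (hlam2 : lam < Δ / K ^ 2) :
    ∃ a : ℝ, 0 < a ∧ ∃ γ C : ℝ, γ ∈ Set.Ioo (0 : ℝ) 1 ∧ 1 ≤ C ∧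
      ∀ (θ : Ed d) (y : Ed m), ‖y‖ ≤ M →
        ∫⁻ z, ENNReal.ofReal (Real.exp (a * ‖z‖ ^ 2)) ∂(kernelQ H lam y θ)
          ≤ ENNReal.ofReal (γ * Real.exp (a * ‖θ‖ ^ 2) + C) :=
  stmt3_general H Δ b K M hdis hlin lam hlam hlam2
end
end

section
/- Under Assumption 1, fix λ > 0 and R > 0. Then for all y ∈ ℝ^m with ‖y‖ ≤ M, all θ ∈ ℝ^d with ‖θ‖ ≤ R, and all Borel sets A ⊆ ℝ^d, the kernel satisfies Q(y, θ, A) ≥ m_{R,M,λ,K} · Leb(A ∩ {x ∈ ℝ^d : ‖x‖ ≤ R}), where m_{R,M,λ,K} := inf{ f_{ξ_0}(z)/(2λ)^{d/2} : z ∈ ℝ^d, ‖z‖ ≤ ((λK+2)R + λK(M+1))/√(2λ) } > 0 and f_{ξ_0} is the standard d-dimensional Gaussian density. Consequently, there exist a Borel probability measure ν_R on ℝ^d and a coefficient α̃_R ∈ (0,1) such that Q(y, θ, A) ≥ α̃_R·ν_R(A) for all such y, θ and all Borel A. -/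
open MeasureTheory ProbabilityTheory Filter Real
open scoped RealInnerProductSpace ENNReal

noncomputable section

/-- The standard `d`-dimensional Gaussian probability density. -/
def gaussDensity (d : ℕ) (z : Ed d) : ℝ :=
  (2 * Real.pi) ^ (-(d : ℝ) / 2) * Real.exp (-‖z‖ ^ 2 / 2)

/- The noise `√(2λ)ξ₀` has density `z ↦ f_{ξ₀}(z/√(2λ))/(2λ)^{d/2}`. For `‖θ‖ ≤ R` and `‖y‖ ≤ M`
the linear growth of `H` keeps the drift `θ − λH(θ,y)` within distance `R + λK(R+M+1)` of the
origin, so every point of the ball `‖x‖ ≤ R` is reached by a noise value of norm at most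
`(λK+2)R + λK(M+1)`. On that compact set the Gaussian density is bounded below by a positive
constant, which gives the density bound `m_{R,M,λ,K}` for `Q(y, θ, ·)` on the ball; normalising
Lebesgue measure on the ball to a probability `ν_R` turns it into `Q(y, θ, ·) ≥ α̃_R ν_R`. -/

theorem lintegral_fin_pi_prod_eq_prod {n : ℕ} {α : Fin n → Type*} [∀ i, MeasurableSpace (α i)]
    (μ : ∀ i, Measure (α i)) [∀ i, SigmaFinite (μ i)] {f : ∀ i, α i → ℝ≥0∞}
    (hf : ∀ i, Measurable (f i)) :
    ∫⁻ x, ∏ i, f i (x i) ∂Measure.pi μ = ∏ i, ∫⁻ t, f i t ∂μ i := by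
  induction n with
  | zero => simp
  | succ n ih =>
    rw [← (measurePreserving_piFinSuccAbove μ 0).symm.lintegral_comp_emb
      (MeasurableEquiv.measurableEmbedding _)]
    simp only [Fin.prod_univ_succAbove _ 0, MeasurableEquiv.piFinSuccAbove_symm_apply,
      Fin.insertNthEquiv_apply, Fin.insertNth_apply_same, Fin.insertNth_apply_succAbove]
    have hm : Measurable fun x : ∀ j, α (Fin.succAbove 0 j) => ∏ j, f _ (x j) :=
      Finset.measurable_prod _ fun j _ => (hf _).comp (measurable_pi_apply j)
    rw [lintegral_prod_mul (hf 0).aemeasurable hm.aemeasurable, ih _ fun j => hf _]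

theorem lintegral_pi_prod_eq_prod {ι : Type*} [Fintype ι] {α : ι → Type*}
    [∀ i, MeasurableSpace (α i)] (μ : ∀ i, Measure (α i)) [∀ i, SigmaFinite (μ i)]
    {f : ∀ i, α i → ℝ≥0∞} (hf : ∀ i, Measurable (f i)) :
    ∫⁻ x, ∏ i, f i (x i) ∂Measure.pi μ = ∏ i, ∫⁻ t, f i t ∂μ i := by
  let e := (Fintype.equivFin ι).symm
  rw [← (measurePreserving_piCongrLeft μ e).lintegral_comp_emb
    (MeasurableEquiv.measurableEmbedding _)]
  simp only [← e.prod_comp, MeasurableEquiv.piCongrLeft_apply_apply]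
  exact lintegral_fin_pi_prod_eq_prod _ fun j => hf _

theorem MeasureTheory.Measure.pi_withDensity {ι : Type*} [Fintype ι] {α : ι → Type*}
    [∀ i, MeasurableSpace (α i)] (μ : ∀ i, Measure (α i)) [∀ i, SigmaFinite (μ i)]
    {f : ∀ i, α i → ℝ≥0∞} (hf : ∀ i, Measurable (f i))
    [∀ i, SigmaFinite ((μ i).withDensity (f i))] :
    Measure.pi (fun i => (μ i).withDensity (f i))
      = (Measure.pi μ).withDensity (fun x => ∏ i, f i (x i)) := by
  refine Measure.pi_eq fun s hs => ?_
  rw [withDensity_apply _ (MeasurableSet.univ_pi hs), Measure.restrict_pi_pi,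
    lintegral_pi_prod_eq_prod _ hf]
  simp_rw [withDensity_apply _ (hs _)]

theorem MeasureTheory.Measure.addHaar_preimage_add_smul {E : Type*} [NormedAddCommGroup E]
    [NormedSpace ℝ E] [MeasurableSpace E] [BorelSpace E] [FiniteDimensional ℝ E]
    (μ : Measure E) [μ.IsAddHaarMeasure] (a : E) {c : ℝ} (hc : c ≠ 0) (s : Set E) :
    μ ((fun x => a + c • x) ⁻¹' s) = ENNReal.ofReal |(c ^ Module.finrank ℝ E)⁻¹| * μ s := by
  change μ ((fun x => c • x) ⁻¹' ((fun x => a + x) ⁻¹' s)) = _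
  rw [Measure.addHaar_preimage_smul μ hc, measure_preimage_add]

theorem exists_ofReal_mul_cond_le {Ω : Type*} [MeasurableSpace Ω] {μ : Measure Ω} {s : Set Ω}
    (hs : MeasurableSet s) (hs0 : μ s ≠ 0) (hsT : μ s ≠ ∞) {c : ℝ} (hc : 0 < c) :
    ∃ α ∈ Set.Ioo (0 : ℝ) 1, ∀ A, ENNReal.ofReal α * μ[|s] A ≤ ENNReal.ofReal c * μ (A ∩ s) := by
  have hpos : 0 < (μ s).toReal := ENNReal.toReal_pos hs0 hsT
  refine ⟨min (c * (μ s).toReal) 2⁻¹, ⟨by positivity, by norm_num⟩, fun A => ?_⟩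
  have hα : ENNReal.ofReal (min (c * (μ s).toReal) 2⁻¹) ≤ ENNReal.ofReal c * μ s := by
    calc ENNReal.ofReal (min (c * (μ s).toReal) 2⁻¹) ≤ ENNReal.ofReal (c * (μ s).toReal) :=
          ENNReal.ofReal_le_ofReal (min_le_left _ _)
      _ = ENNReal.ofReal c * μ s := by rw [ENNReal.ofReal_mul hc.le, ENNReal.ofReal_toReal hsT]
  calc ENNReal.ofReal (min (c * (μ s).toReal) 2⁻¹) * μ[|s] A
      ≤ ENNReal.ofReal c * μ s * ((μ s)⁻¹ * μ (s ∩ A)) := by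
        rw [cond_apply hs]; gcongr
    _ = ENNReal.ofReal c * μ (A ∩ s) := by
        rw [mul_assoc, ← mul_assoc (μ s), ENNReal.mul_inv_cancel hs0 hsT, one_mul,
          Set.inter_comm]

theorem gaussDensity_eq_prod {d : ℕ} (z : Ed d) :
    gaussDensity d z = ∏ i, gaussianPDFReal 0 1 (z i) := by
  simp only [gaussDensity, gaussianPDFReal, sub_zero, NNReal.coe_one, mul_one,
    Finset.prod_mul_distrib, Finset.prod_const, Finset.card_univ, Fintype.card_fin,
    ← Real.exp_sum, ← Finset.sum_div, EuclideanSpace.norm_sq_eq, Real.norm_eq_abs, sq_abs,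
    Finset.sum_neg_distrib, neg_div, inv_pow]
  rw [Real.rpow_neg (by positivity), Real.rpow_div_two_eq_sqrt _ (by positivity),
    Real.rpow_natCast]

theorem stdGaussian_eq_withDensity (d : ℕ) :
    stdGaussian d = volume.withDensity fun z => ENNReal.ofReal (gaussDensity d z) := by
  ext S hS
  have hpre : MeasurableSet (MeasurableEquiv.toLp 2 (Fin d → ℝ) ⁻¹' S) :=
    (MeasurableEquiv.measurable _) hS
  have : SigmaFinite (volume.withDensity (gaussianPDF 0 1)) := by
    rw [← gaussianReal_of_var_ne_zero 0 one_ne_zero]; infer_instance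
  rw [_root_.stdGaussian, Measure.map_apply (MeasurableEquiv.measurable _) hS,
    withDensity_apply _ hS, ← (PiLp.volume_preserving_toLp (Fin d)).setLIntegral_comp_preimage_emb
      (MeasurableEquiv.toLp 2 (Fin d → ℝ)).measurableEmbedding]
  simp_rw [gaussianReal_of_var_ne_zero 0 one_ne_zero]
  rw [Measure.pi_withDensity _ fun _ => measurable_gaussianPDF 0 1, withDensity_apply _ hpre]
  congr with x
  rw [gaussDensity_eq_prod, ENNReal.ofReal_prod_of_nonneg fun i _ => gaussianPDFReal_nonneg 0 1 _]
  rfl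

theorem ofReal_mul_volume_le_stdGaussian {d : ℕ} {W : Set (Ed d)} {c : ℝ}
    (h : ∀ z ∈ W, c ≤ gaussDensity d z) :
    ENNReal.ofReal c * volume W ≤ stdGaussian d W := by
  rw [stdGaussian_eq_withDensity, withDensity_apply', ← setLIntegral_const]
  exact setLIntegral_mono (by unfold gaussDensity; fun_prop)
    fun z hz => ENNReal.ofReal_le_ofReal (h z hz)

theorem gaussDensity_ge_of_norm_le {d : ℕ} {z : Ed d} {r : ℝ} (hz : ‖z‖ ≤ r) :
    (2 * π) ^ (-(d : ℝ) / 2) * exp (-r ^ 2 / 2) ≤ gaussDensity d z := by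
  have : ‖z‖ ^ 2 ≤ r ^ 2 := pow_le_pow_left₀ (norm_nonneg z) hz 2
  unfold gaussDensity
  gcongr

/-- The paper's `m_{R,M,λ,K}` is `gaussDensityInf d (((λK+2)R + λK(M+1))/√(2λ)) ((2λ)^{d/2})`. -/
def gaussDensityInf (d : ℕ) (r s : ℝ) : ℝ :=
  sInf {x : ℝ | ∃ z : Ed d, ‖z‖ ≤ r ∧ x = gaussDensity d z / s}

theorem gaussDensityInf_le {d : ℕ} {r s : ℝ} (hs : 0 ≤ s) {z : Ed d} (hz : ‖z‖ ≤ r) :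
    gaussDensityInf d r s ≤ gaussDensity d z / s := by
  refine csInf_le ⟨0, ?_⟩ ⟨z, hz, rfl⟩
  rintro _ ⟨w, -, rfl⟩
  unfold gaussDensity
  positivity

theorem gaussDensityInf_pos {d : ℕ} {r s : ℝ} (hr : 0 ≤ r) (hs : 0 < s) :
    0 < gaussDensityInf d r s := by
  have hc : 0 < (2 * π) ^ (-(d : ℝ) / 2) * exp (-r ^ 2 / 2) / s := by positivity
  refine hc.trans_le (le_csInf ⟨_, 0, by simpa using hr, rfl⟩ ?_)
  rintro _ ⟨z, hz, rfl⟩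
  exact div_le_div_of_nonneg_right (gaussDensity_ge_of_norm_le hz) hs.le

/- `‖a‖ + ρ ≤ c * r` ensures that every point of `closedBall 0 ρ` is `a + c • z` with `‖z‖ ≤ r`. -/
theorem ofReal_gaussDensityInf_mul_le_map_stdGaussian {d : ℕ} (a : Ed d) {c ρ r : ℝ}
    (hc : 0 < c) (hρ : ‖a‖ + ρ ≤ c * r) {A : Set (Ed d)} (hA : MeasurableSet A) :
    ENNReal.ofReal (gaussDensityInf d r (c ^ d)) * volume (A ∩ Metric.closedBall 0 ρ)
      ≤ (stdGaussian d).map (fun z => a + c • z) A := by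
  set T : Ed d → Ed d := fun z => a + c • z
  have hT : Measurable T := (measurable_id.const_smul c).const_add a
  have hnorm : ∀ z ∈ T ⁻¹' (A ∩ Metric.closedBall 0 ρ), ‖z‖ ≤ r := by
    rintro z ⟨-, hz⟩
    have hTz : ‖a + c • z‖ ≤ ρ := mem_closedBall_zero_iff.mp hz
    have : c * ‖z‖ ≤ c * r := by
      calc c * ‖z‖ = ‖(a + c • z) - a‖ := by rw [add_sub_cancel_left, norm_smul, norm_of_nonneg hc.le]
        _ ≤ ‖a + c • z‖ + ‖a‖ := norm_sub_le _ _
        _ ≤ c * r := by linarith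
    exact le_of_mul_le_mul_left this hc
  have hdens : ∀ z ∈ T ⁻¹' (A ∩ Metric.closedBall 0 ρ),
      gaussDensityInf d r (c ^ d) * c ^ d ≤ gaussDensity d z := fun z hz =>
    (le_div_iff₀ (by positivity)).mp (gaussDensityInf_le (by positivity) (hnorm z hz))
  have hvol : volume (T ⁻¹' (A ∩ Metric.closedBall 0 ρ))
      = ENNReal.ofReal (c ^ d)⁻¹ * volume (A ∩ Metric.closedBall 0 ρ) := by
    rw [Measure.addHaar_preimage_add_smul _ _ hc.ne', finrank_euclideanSpace_fin,
      abs_of_pos (by positivity)]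
  calc ENNReal.ofReal (gaussDensityInf d r (c ^ d)) * volume (A ∩ Metric.closedBall 0 ρ)
      = ENNReal.ofReal (gaussDensityInf d r (c ^ d) * c ^ d)
          * volume (T ⁻¹' (A ∩ Metric.closedBall 0 ρ)) := by
        rw [hvol, ← mul_assoc, ← ENNReal.ofReal_mul' (by positivity), mul_assoc,
          mul_inv_cancel₀ (by positivity), mul_one]
    _ ≤ stdGaussian d (T ⁻¹' (A ∩ Metric.closedBall 0 ρ)) :=
        ofReal_mul_volume_le_stdGaussian hdens
    _ ≤ stdGaussian d (T ⁻¹' A) := measure_mono (Set.preimage_mono Set.inter_subset_left)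
    _ = (stdGaussian d).map T A := (Measure.map_apply hT hA).symm

theorem norm_sub_smul_add_le {d m : ℕ} {H : Ed d → Ed m → Ed d} {K : ℝ}
    (hlin : ∀ (θ : Ed d) (y : Ed m), ‖H θ y‖ ≤ K * (‖θ‖ + ‖y‖ + 1)) {lam R M : ℝ}
    (hlam : 0 ≤ lam) {θ : Ed d} {y : Ed m} (hθ : ‖θ‖ ≤ R) (hy : ‖y‖ ≤ M) :
    ‖θ - lam • H θ y‖ + R ≤ (lam * K + 2) * R + lam * K * (M + 1) := by
  have hK : 0 ≤ K := nonneg_of_mul_nonneg_left ((norm_nonneg _).trans (hlin θ y)) (by positivity)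
  have hH : ‖H θ y‖ ≤ K * (R + M + 1) := (hlin θ y).trans (by gcongr)
  calc ‖θ - lam • H θ y‖ + R ≤ ‖θ‖ + lam * ‖H θ y‖ + R := by
        have := norm_sub_le θ (lam • H θ y)
        rw [norm_smul, norm_of_nonneg hlam] at this
        linarith
    _ ≤ R + lam * (K * (R + M + 1)) + R := by gcongr
    _ = (lam * K + 2) * R + lam * K * (M + 1) := by ring

theorem ofReal_gaussDensityInf_mul_le_kernelQ {d m : ℕ} {H : Ed d → Ed m → Ed d} {K : ℝ}
    (hlin : ∀ (θ : Ed d) (y : Ed m), ‖H θ y‖ ≤ K * (‖θ‖ + ‖y‖ + 1)) {lam R M : ℝ}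
    (hlam : 0 < lam) {θ : Ed d} {y : Ed m} (hθ : ‖θ‖ ≤ R) (hy : ‖y‖ ≤ M)
    {A : Set (Ed d)} (hA : MeasurableSet A) :
    ENNReal.ofReal (gaussDensityInf d (((lam * K + 2) * R + lam * K * (M + 1)) / √(2 * lam))
        ((2 * lam) ^ ((d : ℝ) / 2))) * volume (A ∩ Metric.closedBall 0 R)
      ≤ kernelQ H lam y θ A := by
  have hc : 0 < √(2 * lam) := by positivity
  rw [Real.rpow_div_two_eq_sqrt _ (by positivity), Real.rpow_natCast]
  refine ofReal_gaussDensityInf_mul_le_map_stdGaussian _ hc ?_ hA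
  rw [mul_div_cancel₀ _ hc.ne']
  exact norm_sub_smul_add_le hlin hlam.le hθ hy

theorem stmt5_general {d m : ℕ}
    (H : Ed d → Ed m → Ed d)
    (K M : ℝ)
    (hlin : ∀ (θ : Ed d) (y : Ed m), ‖H θ y‖ ≤ K * (‖θ‖ + ‖y‖ + 1))
    (hM : 0 < M)
    (lam R : ℝ) (hlam : 0 < lam) (hR : 0 < R) :
    (0 < sInf {x : ℝ | ∃ z : Ed d,
        ‖z‖ ≤ ((lam * K + 2) * R + lam * K * (M + 1)) / Real.sqrt (2 * lam) ∧
        x = gaussDensity d z / (2 * lam) ^ ((d : ℝ) / 2)}) ∧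
    (∀ (y : Ed m) (θ : Ed d) (A : Set (Ed d)), ‖y‖ ≤ M → ‖θ‖ ≤ R → MeasurableSet A →
      ENNReal.ofReal (sInf {x : ℝ | ∃ z : Ed d,
          ‖z‖ ≤ ((lam * K + 2) * R + lam * K * (M + 1)) / Real.sqrt (2 * lam) ∧
          x = gaussDensity d z / (2 * lam) ^ ((d : ℝ) / 2)})
        * volume (A ∩ {x : Ed d | ‖x‖ ≤ R}) ≤ kernelQ H lam y θ A) ∧
    (∃ ν : Measure (Ed d), IsProbabilityMeasure ν ∧ ∃ αR : ℝ, αR ∈ Set.Ioo (0 : ℝ) 1 ∧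
      ∀ (y : Ed m) (θ : Ed d) (A : Set (Ed d)), ‖y‖ ≤ M → ‖θ‖ ≤ R → MeasurableSet A →
        ENNReal.ofReal αR * ν A ≤ kernelQ H lam y θ A) := by
  have hr : 0 ≤ ((lam * K + 2) * R + lam * K * (M + 1)) / √(2 * lam) := by
    have := norm_sub_smul_add_le hlin hlam.le (norm_zero.trans_le hR.le) (norm_zero.trans_le hM.le)
    exact div_nonneg (by linarith [norm_nonneg ((0 : Ed d) - lam • H 0 0)]) (sqrt_nonneg _)
  have hpos := gaussDensityInf_pos (d := d) hr (by positivity : 0 < (2 * lam) ^ ((d : ℝ) / 2))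
  have hminor : ∀ (y : Ed m) (θ : Ed d) (A : Set (Ed d)), ‖y‖ ≤ M → ‖θ‖ ≤ R → MeasurableSet A →
      _ ≤ kernelQ H lam y θ A := fun y θ A hy hθ hA =>
    ofReal_gaussDensityInf_mul_le_kernelQ hlin hlam hθ hy hA
  have hB0 : volume (Metric.closedBall (0 : Ed d) R) ≠ 0 :=
    (Metric.measure_closedBall_pos volume 0 hR).ne'
  have hBT : volume (Metric.closedBall (0 : Ed d) R) ≠ ∞ := measure_closedBall_lt_top.ne
  obtain ⟨α, hα, hν⟩ := exists_ofReal_mul_cond_le Metric.isClosed_closedBall.measurableSet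
    hB0 hBT hpos
  rw [show {x : Ed d | ‖x‖ ≤ R} = Metric.closedBall 0 R by ext; simp]
  exact ⟨hpos, hminor, _, cond_isProbabilityMeasure_of_finite hB0 hBT,
    α, hα, fun y θ A hy hθ hA => (hν A).trans (hminor y θ A hy hθ hA)⟩

/-- (Minorization condition: compact sets are small.) Under Assumption 1,
for any `λ, R > 0`, with `m_{R,M,λ,K} := inf{f_{ξ₀}(z)/(2λ)^{d/2} : ‖z‖ ≤ ((λK+2)R+λK(M+1))/√(2λ)}`
one has `m_{R,M,λ,K} > 0` and `Q(y,θ,A) ≥ m_{R,M,λ,K}·Leb(A ∩ {‖x‖ ≤ R})` whenever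
`‖y‖ ≤ M`, `‖θ‖ ≤ R`; consequently there are a Borel probability measure `ν_R` and a
constant `α̃_R ∈ (0,1)` with `Q(y,θ,·) ≥ α̃_R ν_R`. -/
theorem stmt5 {d m : ℕ}
    (H : Ed d → Ed m → Ed d) (hH : Measurable (Function.uncurry H))
    (Δ b K M : ℝ)
    (hΔ : 0 < Δ) (hb : 0 < b)
    (hdis : ∀ (θ : Ed d) (y : Ed m), Δ * ‖θ‖ ^ 2 - b ≤ ⟪H θ y, θ⟫)
    (hK : Δ / Real.sqrt 2 < K)
    (hlin : ∀ (θ : Ed d) (y : Ed m), ‖H θ y‖ ≤ K * (‖θ‖ + ‖y‖ + 1))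
    (hM : 0 < M)
    (lam R : ℝ) (hlam : 0 < lam) (hR : 0 < R) :
    (0 < sInf {x : ℝ | ∃ z : Ed d,
        ‖z‖ ≤ ((lam * K + 2) * R + lam * K * (M + 1)) / Real.sqrt (2 * lam) ∧
        x = gaussDensity d z / (2 * lam) ^ ((d : ℝ) / 2)}) ∧
    (∀ (y : Ed m) (θ : Ed d) (A : Set (Ed d)), ‖y‖ ≤ M → ‖θ‖ ≤ R → MeasurableSet A →
      ENNReal.ofReal (sInf {x : ℝ | ∃ z : Ed d,
          ‖z‖ ≤ ((lam * K + 2) * R + lam * K * (M + 1)) / Real.sqrt (2 * lam) ∧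
          x = gaussDensity d z / (2 * lam) ^ ((d : ℝ) / 2)})
        * volume (A ∩ {x : Ed d | ‖x‖ ≤ R}) ≤ kernelQ H lam y θ A) ∧
    (∃ ν : Measure (Ed d), IsProbabilityMeasure ν ∧ ∃ αR : ℝ, αR ∈ Set.Ioo (0 : ℝ) 1 ∧
      ∀ (y : Ed m) (θ : Ed d) (A : Set (Ed d)), ‖y‖ ≤ M → ‖θ‖ ≤ R → MeasurableSet A →
        ENNReal.ofReal αR * ν A ≤ kernelQ H lam y θ A) :=
  stmt5_general H K M hlin hM lam R hlam hR
end
end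

section
/- Under Assumption 1 and the minorization condition (for R > 0 there are α̃_R ∈ (0,1) and a Borel probability ν_R with Q(y, θ, ·) ≥ α̃_R·ν_R(·) whenever ‖y‖ ≤ M and ‖θ‖ ≤ R), there exists a measurable function T : ℝ^m × ℝ^d × [0,1] → ℝ^d such that: (i) if ε_0 is uniformly distributed on [0,1], then P(T(y, θ, ε_0) ∈ A) = Q(y, θ, A) for every θ ∈ ℝ^d, every Borel set A ⊆ ℝ^d and every y with ‖y‖ ≤ M; (ii) for every u ∈ [0, α̃_R], T(y, θ₁, u) = T(y, θ₂, u) whenever ‖y‖ ≤ M and ‖θ₁‖, ‖θ₂‖ ≤ R. -/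
/-!
On the ball `‖y‖ ≤ M, ‖θ‖ ≤ R` the minorization splits `Q(y, θ, ·)` as the mixture
`α ν + (1 - α) ρ(y, θ, ·)` with a residual Markov kernel `ρ` (off the ball take `α = 0`).
Since `ℝ^d` is standard Borel, `ν` and `ρ` are laws of jointly measurable functions of a uniform
variable on `[0, 1]`. So `T(y, θ, u)` may use `u ≤ α` as a coin flip, sampling `ν` from `u / α`
and `ρ(y, θ, ·)` from `(u - α) / (1 - α)`; on `[0, α]` it then does not depend on `θ`.
-/

open MeasureTheory ProbabilityTheory Filter Real
open scoped RealInnerProductSpace ENNReal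

noncomputable section

open Set Function

theorem Real.map_volume_restrict_Icc_div_sub {a b : ℝ} (hab : a ≤ b) :
    (volume.restrict (Icc a b)).map (fun u => (u - a) / (b - a)) =
      ENNReal.ofReal (b - a) • volume.restrict (Icc (0 : ℝ) 1) := by
  rcases hab.eq_or_lt with rfl | hab
  · simp [Measure.restrict_eq_zero.mpr (Real.volume_singleton (a := a))]
  have hba : 0 < b - a := sub_pos.mpr hab
  let φ : ℝ ≃ᵐ ℝ := (Homeomorph.subRight a).trans (Homeomorph.mulRight₀ _ (inv_ne_zero hba.ne'))
    |>.toMeasurableEquiv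
  have hφ : (φ : ℝ → ℝ) = fun u => (u - a) / (b - a) := rfl
  have hpre : φ ⁻¹' Icc 0 1 = Icc a b := by
    ext u
    simp [hφ, le_div_iff₀ hba, div_le_one hba]
  have hmap : volume.map φ = ENNReal.ofReal (b - a) • volume := by
    rw [show (φ : ℝ → ℝ) = (· * (b - a)⁻¹) ∘ (· - a) from rfl,
      ← Measure.map_map (measurable_mul_const _) (measurable_sub_const a),
      (measurePreserving_sub_right volume a).map_eq,
      Real.map_volume_mul_right (inv_ne_zero hba.ne'), inv_inv, abs_of_pos hba]
  rw [← hφ, ← hpre, ← φ.restrict_map, hmap, Measure.restrict_smul]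

section

variable {X Y : Type*} [MeasurableSpace X] [MeasurableSpace Y]

theorem map_volume_Icc_ite_div {a : ℝ} (ha0 : 0 ≤ a) (ha1 : a < 1) {g h : ℝ → Y}
    (hg : Measurable g) (hh : Measurable h) :
    (volume.restrict (Icc (0 : ℝ) 1)).map
        (fun u => if u ≤ a then g (u / a) else h ((u - a) / (1 - a))) =
      ENNReal.ofReal a • (volume.restrict (Icc (0 : ℝ) 1)).map g +
        ENNReal.ofReal (1 - a) • (volume.restrict (Icc (0 : ℝ) 1)).map h := by
  have hmeas : Measurable fun u => if u ≤ a then g (u / a) else h ((u - a) / (1 - a)) :=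
    Measurable.ite measurableSet_Iic (by fun_prop) (by fun_prop)
  have hsplit : volume.restrict (Icc (0 : ℝ) 1) =
      volume.restrict (Icc 0 a) + volume.restrict (Ioc a 1) := by
    rw [← Measure.restrict_union ((Iic_disjoint_Ioc le_rfl).mono_left Icc_subset_Iic_self)
      measurableSet_Ioc, Icc_union_Ioc_eq_Icc ha0 ha1.le]
  have hleft : (volume.restrict (Icc 0 a)).map
      (fun u => if u ≤ a then g (u / a) else h ((u - a) / (1 - a))) =
      (volume.restrict (Icc 0 a)).map (g ∘ fun u => (u - 0) / (a - 0)) :=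
    Measure.map_congr <| ae_restrict_of_forall_mem measurableSet_Icc fun u hu => by
      simp [hu.2]
  have hright : (volume.restrict (Ioc a 1)).map
      (fun u => if u ≤ a then g (u / a) else h ((u - a) / (1 - a))) =
      (volume.restrict (Icc a 1)).map (h ∘ fun u => (u - a) / (1 - a)) := by
    rw [Measure.restrict_congr_set Ioc_ae_eq_Icc.symm]
    exact Measure.map_congr <| ae_restrict_of_forall_mem measurableSet_Ioc fun u hu => by
      simp [not_le.mpr hu.1]
  conv_lhs => rw [hsplit]
  rw [Measure.map_add _ _ hmeas, hleft, hright, ← Measure.map_map hg (by fun_prop),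
    ← Measure.map_map hh (by fun_prop), Real.map_volume_restrict_Icc_div_sub ha0,
    Real.map_volume_restrict_Icc_div_sub ha1.le, Measure.map_smul, Measure.map_smul, sub_zero]

namespace ProbabilityTheory.Kernel

theorem exists_isMarkovKernel_eq_smul_add_smul (κ : Kernel X Y) [IsMarkovKernel κ]
    (ν : Measure Y) [IsProbabilityMeasure ν] {a : X → ℝ} (ha : Measurable a)
    (ha0 : ∀ x, 0 ≤ a x) (ha1 : ∀ x, a x < 1) (hle : ∀ x, ENNReal.ofReal (a x) • ν ≤ κ x) :
    ∃ ρ : Kernel X Y, IsMarkovKernel ρ ∧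
      ∀ x, κ x = ENNReal.ofReal (a x) • ν + ENNReal.ofReal (1 - a x) • ρ x := by
  let ρ : X → Measure Y := fun x =>
    (ENNReal.ofReal (1 - a x))⁻¹ • (κ x - ENNReal.ofReal (a x) • ν)
  have hρ_apply : ∀ x s, MeasurableSet s →
      ρ x s = (ENNReal.ofReal (1 - a x))⁻¹ * (κ x s - ENNReal.ofReal (a x) * ν s) := by
    intro x s hs
    have := isFiniteMeasure_of_le _ (hle x)
    simp [ρ, Measure.sub_apply hs (hle x)]
  have hρ : Measurable ρ := Measure.measurable_of_measurable_coe _ fun s hs => by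
    simp_rw [hρ_apply _ s hs]
    have := κ.measurable_coe hs
    fun_prop
  have hpos : ∀ x, ENNReal.ofReal (1 - a x) ≠ 0 := fun x => by simpa using ha1 x
  refine ⟨⟨ρ, hρ⟩, ⟨fun x => ⟨?_⟩⟩, fun x => ?_⟩
  · change ρ x univ = 1
    rw [hρ_apply x univ .univ, measure_univ, measure_univ, mul_one, ← ENNReal.ofReal_one,
      ← ENNReal.ofReal_sub _ (ha0 x), ENNReal.ofReal_one]
    exact ENNReal.inv_mul_cancel (hpos x) ENNReal.ofReal_ne_top
  · have := isFiniteMeasure_of_le _ (hle x)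
    change κ x = _ + _ • ρ x
    rw [smul_smul, ENNReal.mul_inv_cancel (hpos x) ENNReal.ofReal_ne_top, one_smul,
      add_comm, Measure.sub_add_cancel_of_le (hle x)]

variable [StandardBorelSpace Y] [Nonempty Y]

theorem exists_measurable_map_volume_Icc_eq (κ : Kernel X Y) [IsMarkovKernel κ] :
    ∃ f : X → ℝ → Y, Measurable (uncurry f) ∧
      ∀ x, (volume.restrict (Icc (0 : ℝ) 1)).map (f x) = κ x := by
  obtain ⟨f, hf, hfκ⟩ := κ.exists_measurable_map_eq_unitInterval
  refine ⟨fun x t => f x (projIcc 0 1 zero_le_one t), by fun_prop, fun x => ?_⟩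
  rw [← unitInterval.measurePreserving_coe.map_eq,
    Measure.map_map (by fun_prop) measurable_subtype_coe]
  simpa [Function.comp_def, projIcc_val] using hfκ x

theorem exists_measurable_map_volume_Icc_eq_of_smul_le (κ : Kernel X Y) [IsMarkovKernel κ]
    (ν : Measure Y) [IsProbabilityMeasure ν] {a : X → ℝ} (ha : Measurable a)
    (ha0 : ∀ x, 0 ≤ a x) (ha1 : ∀ x, a x < 1) (hle : ∀ x, ENNReal.ofReal (a x) • ν ≤ κ x) :
    ∃ f : X → ℝ → Y, Measurable (uncurry f) ∧
      (∀ x, (volume.restrict (Icc (0 : ℝ) 1)).map (f x) = κ x) ∧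
      ∀ x x' u, a x = a x' → u ≤ a x → f x u = f x' u := by
  obtain ⟨ρ, hρ, hκρ⟩ := κ.exists_isMarkovKernel_eq_smul_add_smul ν ha ha0 ha1 hle
  obtain ⟨g, hg, hgν⟩ := (Kernel.const Unit ν).exists_measurable_map_volume_Icc_eq
  obtain ⟨h, hh, hhρ⟩ := ρ.exists_measurable_map_volume_Icc_eq
  refine ⟨fun x u => if u ≤ a x then g () (u / a x) else h x ((u - a x) / (1 - a x)), ?_,
    fun x => ?_, fun x x' u hx hu => ?_⟩
  · exact Measurable.ite (measurableSet_le measurable_snd (ha.comp measurable_fst))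
      (by fun_prop) (by fun_prop)
  · rw [map_volume_Icc_ite_div (ha0 x) (ha1 x) (by fun_prop) (by fun_prop), hgν, hhρ,
      Kernel.const_apply, ← hκρ]
  · simp [hu, ← hx]

end ProbabilityTheory.Kernel

end

instance (d : ℕ) : IsProbabilityMeasure (stdGaussian d) :=
  Measure.isProbabilityMeasure_map (by fun_prop)

instance {d m : ℕ} (H : Ed d → Ed m → Ed d) (lam : ℝ) (y : Ed m) (θ : Ed d) :
    IsProbabilityMeasure (kernelQ H lam y θ) :=
  Measure.isProbabilityMeasure_map (by fun_prop)

theorem measurable_kernelQ {d m : ℕ} {H : Ed d → Ed m → Ed d} (hH : Measurable (uncurry H))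
    (lam : ℝ) : Measurable fun p : Ed m × Ed d => kernelQ H lam p.1 p.2 := by
  let step : (Ed m × Ed d) × Ed d → Ed d := fun q =>
    q.1.2 - lam • H q.1.2 q.1.1 + √(2 * lam) • q.2
  have hstep : Measurable step := by
    have : Measurable fun q : (Ed m × Ed d) × Ed d => H q.1.2 q.1.1 :=
      hH.comp (f := fun q : (Ed m × Ed d) × Ed d => (q.1.2, q.1.1)) (by fun_prop)
    fun_prop
  refine Measure.measurable_of_measurable_coe _ fun s hs => ?_
  have hmap : ∀ p : Ed m × Ed d,
      kernelQ H lam p.1 p.2 s = stdGaussian d (Prod.mk p ⁻¹' (step ⁻¹' s)) :=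
    fun p => Measure.map_apply (hstep.comp measurable_prodMk_left) hs
  simpa only [hmap] using measurable_measure_prodMk_left (hstep hs)

def kernelQ.toKernel {d m : ℕ} {H : Ed d → Ed m → Ed d} (hH : Measurable (uncurry H))
    (lam : ℝ) : Kernel (Ed m × Ed d) (Ed d) :=
  ⟨fun p => kernelQ H lam p.1 p.2, measurable_kernelQ hH lam⟩

instance {d m : ℕ} {H : Ed d → Ed m → Ed d} (hH : Measurable (uncurry H)) (lam : ℝ) :
    IsMarkovKernel (kernelQ.toKernel hH lam) :=
  ⟨fun p => inferInstanceAs (IsProbabilityMeasure (kernelQ H lam p.1 p.2))⟩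

theorem stmt9_general {d m : ℕ}
    (H : Ed d → Ed m → Ed d) (hH : Measurable (Function.uncurry H))
    (M : ℝ)
    (lam R : ℝ)
    (ν : Measure (Ed d)) (hν : IsProbabilityMeasure ν)
    (αR : ℝ) (hαR : αR ∈ Set.Ioo (0 : ℝ) 1)
    (hminor : ∀ (y : Ed m) (θ : Ed d) (A : Set (Ed d)), ‖y‖ ≤ M → ‖θ‖ ≤ R →
      MeasurableSet A → ENNReal.ofReal αR * ν A ≤ kernelQ H lam y θ A) :
    ∃ T : Ed m → Ed d → ℝ → Ed d,
      Measurable (fun p : Ed m × Ed d × ℝ => T p.1 p.2.1 p.2.2) ∧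
      (∀ (y : Ed m) (θ : Ed d), ‖y‖ ≤ M →
        Measure.map (T y θ) (volume.restrict (Set.Icc (0 : ℝ) 1)) = kernelQ H lam y θ) ∧
      (∀ u : ℝ, 0 ≤ u → u ≤ αR → ∀ (y : Ed m) (θ₁ θ₂ : Ed d),
        ‖y‖ ≤ M → ‖θ₁‖ ≤ R → ‖θ₂‖ ≤ R → T y θ₁ u = T y θ₂ u) := by
  let S : Set (Ed m × Ed d) := {p | ‖p.1‖ ≤ M ∧ ‖p.2‖ ≤ R}
  have hS : MeasurableSet S := by
    simp only [S, ofPred_and]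
    exact (measurableSet_le (by fun_prop) measurable_const).inter
      (measurableSet_le (by fun_prop) measurable_const)
  have hle : ∀ p,
      ENNReal.ofReal (S.indicator (fun _ => αR) p) • ν ≤ kernelQ.toKernel hH lam p := by
    intro p
    by_cases hp : p ∈ S
    · rw [indicator_of_mem hp]
      exact Measure.le_iff.2 fun A hA => hminor p.1 p.2 A hp.1 hp.2 hA
    · simpa [indicator_of_notMem hp] using Measure.zero_le _
  obtain ⟨f, hf, hlaw, hcouple⟩ :=
    (kernelQ.toKernel hH lam).exists_measurable_map_volume_Icc_eq_of_smul_le ν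
      (measurable_const.indicator hS) (fun _ => indicator_nonneg (fun _ _ => hαR.1.le) _)
      (fun p => by by_cases hp : p ∈ S <;> simp [hp, hαR.2]) hle
  refine ⟨fun y θ u => f (y, θ) u,
    hf.comp (f := fun p : Ed m × Ed d × ℝ => ((p.1, p.2.1), p.2.2)) (by fun_prop),
    fun y θ _ => hlaw (y, θ), fun u _ hu y θ₁ θ₂ hy h₁ h₂ => ?_⟩
  have hα : ∀ θ, ‖θ‖ ≤ R → S.indicator (fun _ => αR) (y, θ) = αR :=
    fun θ hθ => indicator_of_mem (show (y, θ) ∈ S from ⟨hy, hθ⟩) _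
  exact hcouple _ _ u (by rw [hα θ₁ h₁, hα θ₂ h₂]) (by rwa [hα θ₁ h₁])

/-- (Representation by iterated random functions.) Under Assumption 1 and
the minorization condition with constants `α̃_R ∈ (0,1)` and probability `ν_R` on the ball of
radius `R`, there is a measurable `T : ℝ^m × ℝ^d × [0,1] → ℝ^d` such that (i) if `ε₀` is
uniform on `[0,1]` then `T(y, θ, ε₀)` has law `Q(y, θ, ·)` for every `θ` and every `‖y‖ ≤ M`,
and (ii) `T(y, θ₁, u) = T(y, θ₂, u)` for `u ∈ [0, α̃_R]`, `‖y‖ ≤ M`, `‖θ₁‖, ‖θ₂‖ ≤ R`. -/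
theorem stmt9 {d m : ℕ}
    (H : Ed d → Ed m → Ed d) (hH : Measurable (Function.uncurry H))
    (Δ b K M : ℝ)
    (hΔ : 0 < Δ) (hb : 0 < b)
    (hdis : ∀ (θ : Ed d) (y : Ed m), Δ * ‖θ‖ ^ 2 - b ≤ ⟪H θ y, θ⟫)
    (hK : Δ / Real.sqrt 2 < K)
    (hlin : ∀ (θ : Ed d) (y : Ed m), ‖H θ y‖ ≤ K * (‖θ‖ + ‖y‖ + 1))
    (hM : 0 < M)
    (lam R : ℝ) (hlam : 0 < lam) (hR : 0 < R)
    (ν : Measure (Ed d)) (hν : IsProbabilityMeasure ν)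
    (αR : ℝ) (hαR : αR ∈ Set.Ioo (0 : ℝ) 1)
    (hminor : ∀ (y : Ed m) (θ : Ed d) (A : Set (Ed d)), ‖y‖ ≤ M → ‖θ‖ ≤ R →
      MeasurableSet A → ENNReal.ofReal αR * ν A ≤ kernelQ H lam y θ A) :
    ∃ T : Ed m → Ed d → ℝ → Ed d,
      Measurable (fun p : Ed m × Ed d × ℝ => T p.1 p.2.1 p.2.2) ∧
      (∀ (y : Ed m) (θ : Ed d), ‖y‖ ≤ M →
        Measure.map (T y θ) (volume.restrict (Set.Icc (0 : ℝ) 1)) = kernelQ H lam y θ) ∧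
      (∀ u : ℝ, 0 ≤ u → u ≤ αR → ∀ (y : Ed m) (θ₁ θ₂ : Ed d),
        ‖y‖ ≤ M → ‖θ₁‖ ≤ R → ‖θ₂‖ ≤ R → T y θ₁ u = T y θ₂ u) :=
  stmt9_general H hH M lam R ν hν αR hαR hminor
end
end

section
/- Under Assumption 1 with 0 < λ < Δ/K²: let θ₁, θ₂ ∈ ℝ^d be arbitrary and y = (…, y_{−1}, y_0, y_1, …) ∈ (ℝ^m)^ℤ a fixed trajectory with sup_{k∈ℤ}‖y_k‖ ≤ M. Then there exist constants κ > 0 and N ∈ ℕ, depending only on λ, Δ, b, K and M, such that for all n ≥ N, P(Z_{0,n}^{θ₁,y} ≠ Z_{0,n}^{θ₂,y}) ≤ (V(θ₁) + V(θ₂) + 3)/2 · e^{−κn}, where V(θ) = exp(a‖θ‖²) with a > 0 the constant from the drift lemma. -/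
/-!
Synchronous coupling: both chains are driven by the same innovations, so once they meet they stay
together. The weight `W(x₁, x₂) = 1{x₁ ≠ x₂} (2 + β (V x₁ + V x₂))` with `V θ = exp (a ‖θ‖²)`
contracts in expectation by a factor `ρ < 1` at every step. If both points lie in the small set
`{V ≤ exp (a R²)} = {‖θ‖ ≤ R}`, the chains merge with probability at least `α_R`, which pays for
the drift term once `β` is small. Otherwise `V x₁ + V x₂ ≥ exp (a R²)`, and the drift bound
`γ V + C` with `2C < (1 - γ) exp (a R²)` shrinks the weight. Since the next innovation is
independent of the past, iterating gives `2 P(Z¹ₙ ≠ Z²ₙ) ≤ E W(Z¹ₙ, Z²ₙ) ≤ ρⁿ W(θ₁, θ₂)`.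
-/

open MeasureTheory ProbabilityTheory Filter Real
open scoped RealInnerProductSpace ENNReal

noncomputable section

/-- The auxiliary iterated-random-function process `Z_{s,t}^{init,y}`:
`Z_{s,t} = init` for `t ≤ s` and `Z_{s,t} = T(y_{t−1}, Z_{s,t−1}, ε_t)` for `t > s`. -/
def Zproc {Ω : Type*} {d m : ℕ} (T : Ed m → Ed d → ℝ → Ed d)
    (eps : ℤ → Ω → ℝ) (y : ℤ → Ω → Ed m) (s : ℕ) (init : Ω → Ed d) :
    ℕ → Ω → Ed d
  | 0 => init
  | (t + 1) => fun ω => if t + 1 ≤ s then init ω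
      else T (y (t : ℤ) ω) (Zproc T eps y s init t ω) (eps ((t : ℤ) + 1) ω)

open Classical in
def couplingLyapunov {X : Type*} (V : X → ℝ) (β : ℝ) (p : X × X) : ℝ≥0∞ :=
  if p.1 = p.2 then 0 else ENNReal.ofReal (2 + β * (V p.1 + V p.2))

section Coupling

variable {X U : Type*} [MeasurableSpace U] {ν : Measure U} {F : X → U → X} {V : X → ℝ}
  {β γ C : ℝ}

lemma measurable_couplingLyapunov [MeasurableSpace X] [MeasurableEq X] (hV : Measurable V) :
    Measurable (couplingLyapunov V β) :=
  Measurable.ite (measurableSet_eq_fun measurable_fst measurable_snd) measurable_const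
    (ENNReal.measurable_ofReal.comp (measurable_const.add
      (measurable_const.mul ((hV.comp measurable_fst).add (hV.comp measurable_snd)))))

lemma couplingLyapunov_of_ne {x₁ x₂ : X} (h : x₁ ≠ x₂) :
    couplingLyapunov V β (x₁, x₂) = ENNReal.ofReal (2 + β * (V x₁ + V x₂)) :=
  if_neg h

lemma two_le_couplingLyapunov (hV : ∀ x, 0 ≤ V x) (hβ : 0 ≤ β) {x₁ x₂ : X} (h : x₁ ≠ x₂) :
    2 ≤ couplingLyapunov V β (x₁, x₂) := by
  rw [couplingLyapunov_of_ne h, ← ENNReal.ofReal_ofNat 2]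
  exact ENNReal.ofReal_le_ofReal (le_add_of_nonneg_right (by positivity [hV x₁, hV x₂]))

lemma couplingLyapunov_le_ofReal (x₁ x₂ : X) :
    couplingLyapunov V β (x₁, x₂) ≤ ENNReal.ofReal (2 + β * (V x₁ + V x₂)) := by
  unfold couplingLyapunov
  split_ifs <;> simp

lemma couplingLyapunov_le_indicator_add (hV : ∀ x, 0 ≤ V x) (hβ : 0 ≤ β) (x₁ x₂ : X) :
    couplingLyapunov V β (x₁, x₂) ≤ {p : X × X | p.1 ≠ p.2}.indicator 2 (x₁, x₂)
      + ENNReal.ofReal (β * V x₁) + ENNReal.ofReal (β * V x₂) := by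
  by_cases h : x₁ = x₂
  · simp [couplingLyapunov, h]
  · rw [couplingLyapunov_of_ne h, Set.indicator_of_mem (show (x₁, x₂) ∈ _ from h),
      Pi.ofNat_apply, ← ENNReal.ofReal_ofNat 2, ← ENNReal.ofReal_add (by norm_num)
      (mul_nonneg hβ (hV x₁)), ← ENNReal.ofReal_add (by positivity [hV x₁]) (mul_nonneg hβ (hV x₂)),
      mul_add, add_assoc]

lemma two_mul_measure_ne_le_lintegral_couplingLyapunov {Ω : Type*} {mΩ : MeasurableSpace Ω}
    {μ : Measure Ω} [MeasurableSpace X] [MeasurableEq X] (hV : Measurable V) (hV0 : ∀ x, 0 ≤ V x)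
    (hβ : 0 ≤ β) {ξ₁ ξ₂ : Ω → X} (hξ₁ : Measurable ξ₁) (hξ₂ : Measurable ξ₂) :
    2 * μ {ω | ξ₁ ω ≠ ξ₂ ω} ≤ ∫⁻ ω, couplingLyapunov V β (ξ₁ ω, ξ₂ ω) ∂μ :=
  (mul_le_mul_right (measure_mono fun _ h => two_le_couplingLyapunov hV0 hβ h) 2).trans
    (mul_meas_ge_le_lintegral₀
      ((measurable_couplingLyapunov hV).comp (hξ₁.prodMk hξ₂)).aemeasurable 2)

lemma lintegral_ofReal_mul_comp_le (hβ : 0 ≤ β)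
    (hdrift : ∀ x, ∫⁻ u, ENNReal.ofReal (V (F x u)) ∂ν ≤ ENNReal.ofReal (γ * V x + C)) (x : X) :
    ∫⁻ u, ENNReal.ofReal (β * V (F x u)) ∂ν ≤ ENNReal.ofReal (β * (γ * V x + C)) := by
  simp_rw [ENNReal.ofReal_mul hβ]
  rw [lintegral_const_mul' _ _ ENNReal.ofReal_ne_top]
  exact mul_le_mul_right (hdrift x) _

lemma lintegral_couplingLyapunov_comp_le [MeasurableSpace X] (hV : Measurable V)
    (hV0 : ∀ x, 0 ≤ V x) (hβ : 0 ≤ β) (hF : ∀ x, Measurable (F x))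
    (hdrift : ∀ x, ∫⁻ u, ENNReal.ofReal (V (F x u)) ∂ν ≤ ENNReal.ofReal (γ * V x + C))
    (x₁ x₂ : X) :
    ∫⁻ u, couplingLyapunov V β (F x₁ u, F x₂ u) ∂ν ≤ 2 * ν {u | F x₁ u ≠ F x₂ u}
      + ENNReal.ofReal (β * (γ * V x₁ + C)) + ENNReal.ofReal (β * (γ * V x₂ + C)) := by
  have hm : ∀ x, Measurable fun u => ENNReal.ofReal (β * V (F x u)) := fun x =>
    ENNReal.measurable_ofReal.comp (measurable_const.mul (hV.comp (hF x)))
  calc ∫⁻ u, couplingLyapunov V β (F x₁ u, F x₂ u) ∂ν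
      ≤ ∫⁻ u, {u | F x₁ u ≠ F x₂ u}.indicator 2 u
          + ENNReal.ofReal (β * V (F x₁ u)) + ENNReal.ofReal (β * V (F x₂ u)) ∂ν :=
        lintegral_mono fun u => couplingLyapunov_le_indicator_add hV0 hβ _ _
    _ = ∫⁻ u, {u | F x₁ u ≠ F x₂ u}.indicator 2 u ∂ν
          + ∫⁻ u, ENNReal.ofReal (β * V (F x₁ u)) ∂ν
          + ∫⁻ u, ENNReal.ofReal (β * V (F x₂ u)) ∂ν := by
        rw [lintegral_add_right _ (hm x₂), lintegral_add_right _ (hm x₁)]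
    _ ≤ _ := by
        gcongr
        · exact lintegral_indicator_const_le _ _
        · exact lintegral_ofReal_mul_comp_le hβ hdrift x₁
        · exact lintegral_ofReal_mul_comp_le hβ hdrift x₂

lemma lintegral_couplingLyapunov_comp_le_mul [MeasurableSpace X] [IsProbabilityMeasure ν]
    (hV : Measurable V) (hV0 : ∀ x, 0 ≤ V x) (hβ : 0 ≤ β) (hγ : 0 ≤ γ) (hC : 0 ≤ C)
    (hF : ∀ x, Measurable (F x))
    (hdrift : ∀ x, ∫⁻ u, ENNReal.ofReal (V (F x u)) ∂ν ≤ ENNReal.ofReal (γ * V x + C))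
    {B α ρ : ℝ} (hα : α ≤ 1) (hρ : 0 ≤ ρ)
    (hcouple : ∀ x₁ x₂, V x₁ ≤ B → V x₂ ≤ B → ν {u | F x₁ u ≠ F x₂ u} ≤ ENNReal.ofReal (1 - α))
    (hsmall : ∀ s, 0 ≤ s → s ≤ 2 * B → 2 * (1 - α) + β * (γ * s + 2 * C) ≤ ρ * (2 + β * s))
    (hlarge : ∀ s, B ≤ s → 2 + β * (γ * s + 2 * C) ≤ ρ * (2 + β * s)) (x₁ x₂ : X) :
    ∫⁻ u, couplingLyapunov V β (F x₁ u, F x₂ u) ∂ν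
      ≤ ENNReal.ofReal ρ * couplingLyapunov V β (x₁, x₂) := by
  by_cases h : x₁ = x₂
  · simp [couplingLyapunov, h]
  obtain ⟨p, hp, hνp, hρp⟩ : ∃ p : ℝ, 0 ≤ p ∧ ν {u | F x₁ u ≠ F x₂ u} ≤ ENNReal.ofReal p ∧
      2 * p + β * (γ * (V x₁ + V x₂) + 2 * C) ≤ ρ * (2 + β * (V x₁ + V x₂)) := by
    by_cases hsmallset : V x₁ ≤ B ∧ V x₂ ≤ B
    · exact ⟨1 - α, sub_nonneg.2 hα, hcouple x₁ x₂ hsmallset.1 hsmallset.2,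
        hsmall _ (add_nonneg (hV0 x₁) (hV0 x₂)) (by linarith [hsmallset.1, hsmallset.2])⟩
    · have hB : B ≤ V x₁ + V x₂ := by
        rcases not_and_or.1 hsmallset with h₁ | h₂
        · linarith [hV0 x₂]
        · linarith [hV0 x₁]
      exact ⟨1, zero_le_one, ENNReal.ofReal_one ▸ prob_le_one, by
        simpa only [mul_one] using hlarge _ hB⟩
  have hVx : ∀ x, 0 ≤ β * (γ * V x + C) := fun x => by positivity [hV0 x]
  calc ∫⁻ u, couplingLyapunov V β (F x₁ u, F x₂ u) ∂ν
      ≤ 2 * ν {u | F x₁ u ≠ F x₂ u}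
        + ENNReal.ofReal (β * (γ * V x₁ + C)) + ENNReal.ofReal (β * (γ * V x₂ + C)) :=
      lintegral_couplingLyapunov_comp_le hV hV0 hβ hF hdrift x₁ x₂
    _ ≤ 2 * ENNReal.ofReal p
        + ENNReal.ofReal (β * (γ * V x₁ + C)) + ENNReal.ofReal (β * (γ * V x₂ + C)) := by
      gcongr
    _ = ENNReal.ofReal (2 * p + β * (γ * (V x₁ + V x₂) + 2 * C)) := by
      rw [← ENNReal.ofReal_ofNat 2, ← ENNReal.ofReal_mul (by norm_num),
        ← ENNReal.ofReal_add (by positivity) (hVx x₁),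
        ← ENNReal.ofReal_add (by positivity [hVx x₁]) (hVx x₂)]
      ring_nf
    _ ≤ ENNReal.ofReal ρ * couplingLyapunov V β (x₁, x₂) := by
      rw [couplingLyapunov_of_ne h, ← ENNReal.ofReal_mul hρ]
      exact ENNReal.ofReal_le_ofReal hρp

end Coupling

lemma exists_coupling_rate {γ C B α : ℝ} (hγ₀ : 0 ≤ γ) (hγ₁ : γ < 1) (hC : 0 ≤ C)
    (hα₀ : 0 < α) (hα₁ : α ≤ 1) (hCB : 2 * C < (1 - γ) * B) :
    ∃ β ρ : ℝ, 0 < β ∧ β ≤ 1 ∧ 0 < ρ ∧ ρ < 1 ∧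
      (∀ s, 0 ≤ s → s ≤ 2 * B → 2 * (1 - α) + β * (γ * s + 2 * C) ≤ ρ * (2 + β * s)) ∧
      (∀ s, B ≤ s → 2 + β * (γ * s + 2 * C) ≤ ρ * (2 + β * s)) := by
  have hB : 0 < B := pos_of_mul_pos_right (hCB.trans_le' (by positivity)) (by linarith)
  obtain ⟨β, hβ₀, hβ₁, hβα⟩ : ∃ β : ℝ, 0 < β ∧ β ≤ 1 ∧ β * (2 * γ * B + 2 * C) ≤ α := by
    refine ⟨α / (2 * (γ * B + C + 1)), by positivity, ?_, ?_⟩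
    · rw [div_le_one (by positivity)]
      nlinarith [mul_nonneg hγ₀ hB.le]
    · rw [div_mul_eq_mul_div, div_le_iff₀ (by positivity)]
      nlinarith
  -- `(2 + β (γ s + 2C)) / (2 + β s)` decreases in `s` because `γ ≤ 1 + β C`: its value at `B`
  -- serves for all `s ≥ B`
  set ρ₂ := (2 + β * (γ * B + 2 * C)) / (2 + β * B) with hρ₂
  have hρ₂₀ : 0 < ρ₂ := by positivity
  have hρ₂₁ : ρ₂ < 1 := by
    rw [div_lt_one (by positivity)]
    nlinarith
  refine ⟨β, max (1 - α / 2) ρ₂, hβ₀, hβ₁, hρ₂₀.trans_le (le_max_right _ _),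
    max_lt (by linarith) hρ₂₁, fun s hs hs₂ => ?_, fun s hs => ?_⟩
  · calc 2 * (1 - α) + β * (γ * s + 2 * C) ≤ (1 - α / 2) * 2 := by
          nlinarith [mul_le_mul_of_nonneg_left hs₂ (mul_nonneg hβ₀.le hγ₀)]
      _ ≤ max (1 - α / 2) ρ₂ * (2 + β * s) := by
        gcongr
        · exact le_max_left _ _
        · linarith [mul_nonneg hβ₀.le hs]
  · calc 2 + β * (γ * s + 2 * C) ≤ ρ₂ * (2 + β * s) := by
          rw [hρ₂, div_mul_eq_mul_div, le_div_iff₀ (by positivity)]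
          nlinarith [mul_nonneg (mul_nonneg hβ₀.le (sub_nonneg.2 hs))
            (show 0 ≤ 1 + β * C - γ by nlinarith)]
      _ ≤ max (1 - α / 2) ρ₂ * (2 + β * s) := by
        gcongr
        · linarith [mul_nonneg hβ₀.le (hB.le.trans hs)]
        · exact le_max_right _ _

lemma ProbabilityTheory.IndepFun.lintegral_comp_le {Ω α β : Type*} {mΩ : MeasurableSpace Ω}
    {P : Measure Ω} [IsFiniteMeasure P] [MeasurableSpace α] [MeasurableSpace β]
    {ξ : Ω → α} {e : Ω → β} (hξe : IndepFun ξ e P) (hξ : Measurable ξ) (he : Measurable e)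
    {f : α → β → ℝ≥0∞} (hf : Measurable (Function.uncurry f)) {g : α → ℝ≥0∞}
    (hg : Measurable g) {c : ℝ≥0∞} (hfg : ∀ x, ∫⁻ u, f x u ∂(P.map e) ≤ c * g x) :
    ∫⁻ ω, f (ξ ω) (e ω) ∂P ≤ c * ∫⁻ ω, g (ξ ω) ∂P :=
  calc ∫⁻ ω, f (ξ ω) (e ω) ∂P = ∫⁻ q, Function.uncurry f q ∂(P.map fun ω => (ξ ω, e ω)) :=
        (lintegral_map hf (hξ.prodMk he)).symm
    _ = ∫⁻ x, ∫⁻ u, f x u ∂(P.map e) ∂(P.map ξ) := by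
        rw [hξe.map_prod_eq_prod_map_map hξ.aemeasurable he.aemeasurable,
          lintegral_prod _ hf.aemeasurable]
        rfl
    _ ≤ ∫⁻ x, c * g x ∂(P.map ξ) := lintegral_mono hfg
    _ = c * ∫⁻ ω, g (ξ ω) ∂P := by rw [lintegral_const_mul _ hg, lintegral_map hg hξ]

section IteratedRandomFunction

variable {Ω : Type*} {mΩ : MeasurableSpace Ω} {d m : ℕ} {T : Ed m → Ed d → ℝ → Ed d}
  {eps : ℤ → Ω → ℝ}

lemma Zproc_zero_succ (y : ℤ → Ω → Ed m) (init : Ω → Ed d) (t : ℕ) (ω : Ω) :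
    Zproc T eps y 0 init (t + 1) ω = T (y t ω) (Zproc T eps y 0 init t ω) (eps (t + 1) ω) := by
  simp [Zproc]

lemma measurable_Zproc_iSup_comap
    (hTm : Measurable (fun p : Ed m × Ed d × ℝ => T p.1 p.2.1 p.2.2)) (y : ℤ → Ed m)
    (θ : Ed d) (t : ℕ) :
    Measurable[⨆ i ∈ Set.Icc (1 : ℤ) t, MeasurableSpace.comap (eps i) inferInstance]
      (Zproc T eps (fun k _ => y k) 0 (fun _ => θ) t) := by
  induction t with
  | zero => exact measurable_const
  | succ t ih =>
    set 𝓕 := fun t : ℕ => ⨆ i ∈ Set.Icc (1 : ℤ) t, MeasurableSpace.comap (eps i) inferInstance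
    have hmono : 𝓕 t ≤ 𝓕 (t + 1) :=
      biSup_mono fun i hi => ⟨hi.1, hi.2.trans (by push_cast; omega)⟩
    have heps : Measurable[𝓕 (t + 1)] (eps (t + 1)) :=
      Measurable.of_comap_le (le_biSup (fun i => MeasurableSpace.comap (eps i) inferInstance)
        ⟨by omega, by push_cast; omega⟩)
    exact (hTm.comp (measurable_const.prodMk ((ih.mono hmono le_rfl).prodMk heps)) :)

variable (hTm : Measurable (fun p : Ed m × Ed d × ℝ => T p.1 p.2.1 p.2.2))
  (hεm : ∀ t, Measurable (eps t)) (y : ℤ → Ed m)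
include hTm hεm

lemma measurable_Zproc (θ : Ed d) (t : ℕ) :
    Measurable (Zproc T eps (fun k _ => y k) 0 (fun _ => θ) t) :=
  (measurable_Zproc_iSup_comap hTm y θ t).mono
    (iSup₂_le fun i _ => (hεm i).comap_le) le_rfl

lemma indepFun_Zproc_pair_eps {P : Measure Ω} (hεi : iIndepFun eps P) (θ₁ θ₂ : Ed d) (t : ℕ) :
    IndepFun (fun ω => (Zproc T eps (fun k _ => y k) 0 (fun _ => θ₁) t ω,
      Zproc T eps (fun k _ => y k) 0 (fun _ => θ₂) t ω)) (eps (t + 1)) P := by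
  have hdisj : Disjoint (Set.Icc (1 : ℤ) t) {(t : ℤ) + 1} := by
    simp only [Set.disjoint_singleton_right, Set.mem_Icc]
    omega
  have hindep := indep_iSup_of_disjoint (fun i => (hεm i).comap_le) hεi hdisj
  refine indep_of_indep_of_le_right (indep_of_indep_of_le_left hindep ?_) ?_
  · exact ((measurable_Zproc_iSup_comap hTm y θ₁ t).prodMk
      (measurable_Zproc_iSup_comap hTm y θ₂ t)).comap_le
  · exact le_biSup (fun i => MeasurableSpace.comap (eps i) inferInstance) rfl

lemma lintegral_Zproc_pair_le_pow {P : Measure Ω} [IsProbabilityMeasure P]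
    (hεi : iIndepFun eps P) {g : Ed d × Ed d → ℝ≥0∞} (hg : Measurable g) {c : ℝ≥0∞}
    (hstep : ∀ (t : ℕ) (z : Ed d × Ed d),
      ∫⁻ u, g (T (y t) z.1 u, T (y t) z.2 u) ∂(P.map (eps (t + 1))) ≤ c * g z)
    (θ₁ θ₂ : Ed d) (n : ℕ) :
    ∫⁻ ω, g (Zproc T eps (fun k _ => y k) 0 (fun _ => θ₁) n ω,
      Zproc T eps (fun k _ => y k) 0 (fun _ => θ₂) n ω) ∂P ≤ c ^ n * g (θ₁, θ₂) := by
  induction n with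
  | zero => simp [Zproc]
  | succ t ih =>
    have hTy : Measurable (Function.uncurry fun (z : Ed d × Ed d) (u : ℝ) =>
        g (T (y t) z.1 u, T (y t) z.2 u)) :=
      hg.comp
        ((hTm.comp (measurable_const.prodMk (measurable_fst.fst.prodMk measurable_snd))).prodMk
          (hTm.comp (measurable_const.prodMk (measurable_fst.snd.prodMk measurable_snd))))
    simp only [Zproc_zero_succ]
    calc _ ≤ c * ∫⁻ ω, g (Zproc T eps (fun k _ => y k) 0 (fun _ => θ₁) t ω,
            Zproc T eps (fun k _ => y k) 0 (fun _ => θ₂) t ω) ∂P :=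
          (indepFun_Zproc_pair_eps hTm hεm y hεi θ₁ θ₂ t).lintegral_comp_le
            ((measurable_Zproc hTm hεm y θ₁ t).prodMk (measurable_Zproc hTm hεm y θ₂ t))
            (hεm _) hTy hg (hstep t)
      _ ≤ c * (c ^ t * g (θ₁, θ₂)) := by gcongr
      _ = c ^ (t + 1) * g (θ₁, θ₂) := by ring

lemma two_mul_measure_Zproc_ne_le {P : Measure Ω} [IsProbabilityMeasure P]
    (hεi : iIndepFun eps P) {V : Ed d → ℝ} (hV : Measurable V) (hV0 : ∀ x, 0 ≤ V x) {β ρ : ℝ}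
    (hβ : 0 ≤ β)
    (hstep : ∀ (t : ℕ) (z : Ed d × Ed d),
      ∫⁻ u, couplingLyapunov V β (T (y t) z.1 u, T (y t) z.2 u) ∂(P.map (eps (t + 1)))
        ≤ ENNReal.ofReal ρ * couplingLyapunov V β z)
    (θ₁ θ₂ : Ed d) (n : ℕ) :
    2 * P {ω | Zproc T eps (fun k _ => y k) 0 (fun _ => θ₁) n ω
        ≠ Zproc T eps (fun k _ => y k) 0 (fun _ => θ₂) n ω}
      ≤ ENNReal.ofReal ρ ^ n * ENNReal.ofReal (2 + β * (V θ₁ + V θ₂)) :=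
  (two_mul_measure_ne_le_lintegral_couplingLyapunov hV hV0 hβ
    (measurable_Zproc hTm hεm y θ₁ n) (measurable_Zproc hTm hεm y θ₂ n)).trans
    ((lintegral_Zproc_pair_le_pow hTm hεm y hεi (measurable_couplingLyapunov hV) hstep θ₁ θ₂
      n).trans (mul_le_mul_right (couplingLyapunov_le_ofReal θ₁ θ₂) _))

end IteratedRandomFunction

lemma volume_restrict_Icc_setOf_ne_le {X : Type*} {f g : ℝ → X} {α : ℝ} (hα : 0 ≤ α)
    (hfg : ∀ u ∈ Set.Icc 0 α, f u = g u) :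
    volume.restrict (Set.Icc (0 : ℝ) 1) {u | f u ≠ g u} ≤ ENNReal.ofReal (1 - α) := by
  have hcompl : (Set.Icc 0 α)ᶜ ∩ Set.Icc 0 1 = Set.Ioc α 1 := by
    ext u
    simp only [Set.mem_inter_iff, Set.mem_compl_iff, Set.mem_Icc, Set.mem_Ioc, not_and, not_le]
    exact ⟨fun ⟨h, hu₀, hu₁⟩ => ⟨h hu₀, hu₁⟩,
      fun ⟨hu₀, hu₁⟩ => ⟨fun _ => hu₀, hα.trans hu₀.le, hu₁⟩⟩
  calc _ ≤ volume.restrict (Set.Icc (0 : ℝ) 1) (Set.Icc 0 α)ᶜ :=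
        measure_mono fun u (hu : f u ≠ g u) hu' => hu (hfg u hu')
    _ = ENNReal.ofReal (1 - α) := by
        rw [Measure.restrict_apply measurableSet_Icc.compl, hcompl, Real.volume_Ioc]

lemma toReal_le_of_two_mul_le_ofReal {Ω : Type*} {mΩ : MeasurableSpace Ω} {μ : Measure Ω}
    {S : Set Ω} {ρ β s : ℝ} {n : ℕ} (hρ : 0 ≤ ρ) (hβ₀ : 0 ≤ β) (hβ₁ : β ≤ 1) (hs : 0 ≤ s)
    (h : 2 * μ S ≤ ENNReal.ofReal ρ ^ n * ENNReal.ofReal (2 + β * s)) :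
    (μ S).toReal ≤ (s + 2) / 2 * ρ ^ n := by
  rw [← ENNReal.ofReal_pow hρ, ← ENNReal.ofReal_mul (by positivity)] at h
  have h' := ENNReal.toReal_le_of_le_ofReal (by positivity) h
  rw [ENNReal.toReal_mul, ENNReal.toReal_ofNat] at h'
  nlinarith [mul_le_mul_of_nonneg_left (mul_le_of_le_one_left hs hβ₁) (pow_nonneg hρ n)]

theorem stmt10_general {Ω : Type*} {mΩ : MeasurableSpace Ω} (P : Measure Ω)
    [IsProbabilityMeasure P] {d m : ℕ}
    (H : Ed d → Ed m → Ed d)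
    (M : ℝ)
    (lam : ℝ)
    -- the drift constants:
    (a γ C : ℝ) (ha : 0 < a) (hγ : γ ∈ Set.Ioo (0 : ℝ) 1) (hC : 1 ≤ C)
    (hdrift : ∀ (θ : Ed d) (y : Ed m), ‖y‖ ≤ M →
      ∫⁻ z, ENNReal.ofReal (Real.exp (a * ‖z‖ ^ 2)) ∂(kernelQ H lam y θ)
        ≤ ENNReal.ofReal (γ * Real.exp (a * ‖θ‖ ^ 2) + C))
    -- the radius `R` of the small set, chosen large enough as in the proof:
    (R : ℝ) (hR : 0 < R)
    (hRbig : ∃ γ' : ℝ, γ < γ' ∧ γ' < 1 ∧ 2 * C < (γ' - γ) * Real.exp (a / 2 * R ^ 2))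
    -- i.i.d. uniform innovations on [0,1]:
    (eps : ℤ → Ω → ℝ) (hεm : ∀ t, Measurable (eps t))
    (hεi : iIndepFun eps P)
    (hεu : ∀ t, Measure.map (eps t) P = volume.restrict (Set.Icc (0 : ℝ) 1))
    -- the representation map `T` and its coupling property on the small set:
    (T : Ed m → Ed d → ℝ → Ed d)
    (hTm : Measurable (fun p : Ed m × Ed d × ℝ => T p.1 p.2.1 p.2.2))
    (αR : ℝ) (hαR : αR ∈ Set.Ioo (0 : ℝ) 1)
    (hTrep : ∀ (y : Ed m) (θ : Ed d), ‖y‖ ≤ M →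
      Measure.map (T y θ) (volume.restrict (Set.Icc (0 : ℝ) 1)) = kernelQ H lam y θ)
    (hTc : ∀ u : ℝ, 0 ≤ u → u ≤ αR → ∀ (y : Ed m) (θ₁ θ₂ : Ed d),
      ‖y‖ ≤ M → ‖θ₁‖ ≤ R → ‖θ₂‖ ≤ R → T y θ₁ u = T y θ₂ u) :
    ∃ κ : ℝ, 0 < κ ∧ ∃ N : ℕ, ∀ (θ₁ θ₂ : Ed d) (y : ℤ → Ed m),
      (∀ k : ℤ, ‖y k‖ ≤ M) → ∀ n : ℕ, N ≤ n →
        (P {ω | Zproc T eps (fun k _ => y k) 0 (fun _ => θ₁) n ω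
            ≠ Zproc T eps (fun k _ => y k) 0 (fun _ => θ₂) n ω}).toReal
          ≤ (Real.exp (a * ‖θ₁‖ ^ 2) + Real.exp (a * ‖θ₂‖ ^ 2) + 3) / 2
            * Real.exp (-κ * n) := by
  obtain ⟨γ', hγγ', hγ'₁, hRγ'⟩ := hRbig
  set V : Ed d → ℝ := fun θ => Real.exp (a * ‖θ‖ ^ 2)
  have hV0 : ∀ θ, 0 ≤ V θ := fun θ => (Real.exp_pos _).le
  have hVm : Measurable V := by fun_prop
  have hCB : 2 * C < (1 - γ) * Real.exp (a * R ^ 2) := hRγ'.trans_le (by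
    gcongr
    · linarith
    · nlinarith)
  obtain ⟨β, ρ, hβ₀, hβ₁, hρ₀, hρ₁, hsmall, hlarge⟩ :=
    exists_coupling_rate hγ.1.le hγ.2 (by linarith) hαR.1 hαR.2.le hCB
  refine ⟨-Real.log ρ, neg_pos.2 (Real.log_neg hρ₀ hρ₁), 0, fun θ₁ θ₂ y hy n _ => ?_⟩
  have hball : ∀ x, V x ≤ Real.exp (a * R ^ 2) → ‖x‖ ≤ R := fun x hx =>
    (pow_le_pow_iff_left₀ (norm_nonneg x) hR.le two_ne_zero).1
      (le_of_mul_le_mul_left (Real.exp_le_exp.1 hx) ha)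
  have hTu : ∀ t x, Measurable (T (y t) x) := fun t x =>
    hTm.comp (measurable_const.prodMk (measurable_const.prodMk measurable_id))
  have hstep : ∀ (t : ℕ) (z : Ed d × Ed d),
      ∫⁻ u, couplingLyapunov V β (T (y t) z.1 u, T (y t) z.2 u) ∂(P.map (eps (t + 1)))
        ≤ ENNReal.ofReal ρ * couplingLyapunov V β z := by
    intro t z
    have := Measure.isProbabilityMeasure_map (μ := P) (hεm (t + 1)).aemeasurable
    rw [hεu] at this ⊢
    refine lintegral_couplingLyapunov_comp_le_mul hVm hV0 hβ₀.le hγ.1.le (by linarith) (hTu t)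
      (fun x => ?_) hαR.2.le hρ₀.le (fun x₁ x₂ h₁ h₂ => ?_) hsmall hlarge z.1 z.2
    · rw [← lintegral_map hVm.ennreal_ofReal (hTu t x), hTrep _ _ (hy t)]
      exact hdrift x (y t) (hy t)
    · exact volume_restrict_Icc_setOf_ne_le hαR.1.le fun u hu =>
        hTc u hu.1 hu.2 _ _ _ (hy t) (hball x₁ h₁) (hball x₂ h₂)
  rw [neg_neg, mul_comm (Real.log ρ), Real.exp_nat_mul, Real.exp_log hρ₀]
  refine (toReal_le_of_two_mul_le_ofReal hρ₀.le hβ₀.le hβ₁ (add_nonneg (hV0 θ₁) (hV0 θ₂))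
    (two_mul_measure_Zproc_ne_le hTm hεm y hεi hVm hV0 hβ₀.le hstep θ₁ θ₂ n)).trans ?_
  gcongr
  linarith

/-- (Quenched coupling.) Under Assumption 1 with `0 < λ < Δ/K²`,
for the iterated-random-function representation of SGLD along any fixed data
trajectory bounded by `M`, there exist `κ > 0` and `N ∈ ℕ` (depending only on
`λ, Δ, b, K, M`) such that for all `n ≥ N` and all initial values `θ₁, θ₂`,
`P(Z_{0,n}^{θ₁,y} ≠ Z_{0,n}^{θ₂,y}) ≤ (V(θ₁)+V(θ₂)+3)/2 · e^{−κn}`,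
where `V(θ) = exp(a‖θ‖²)` with `a` from the drift lemma. -/
theorem stmt10 {Ω : Type*} {mΩ : MeasurableSpace Ω} (P : Measure Ω)
    [IsProbabilityMeasure P] {d m : ℕ}
    (H : Ed d → Ed m → Ed d) (hH : Measurable (Function.uncurry H))
    (Δ b K M : ℝ)
    (hΔ : 0 < Δ) (hb : 0 < b)
    (hdis : ∀ (θ : Ed d) (y : Ed m), Δ * ‖θ‖ ^ 2 - b ≤ ⟪H θ y, θ⟫)
    (hK : Δ / Real.sqrt 2 < K)
    (hlin : ∀ (θ : Ed d) (y : Ed m), ‖H θ y‖ ≤ K * (‖θ‖ + ‖y‖ + 1))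
    (hM : 0 < M)
    (lam : ℝ) (hlam : 0 < lam) (hlam2 : lam < Δ / K ^ 2)
    -- the drift constants:
    (a γ C : ℝ) (ha : 0 < a) (hγ : γ ∈ Set.Ioo (0 : ℝ) 1) (hC : 1 ≤ C)
    (hdrift : ∀ (θ : Ed d) (y : Ed m), ‖y‖ ≤ M →
      ∫⁻ z, ENNReal.ofReal (Real.exp (a * ‖z‖ ^ 2)) ∂(kernelQ H lam y θ)
        ≤ ENNReal.ofReal (γ * Real.exp (a * ‖θ‖ ^ 2) + C))
    -- the radius `R` of the small set, chosen large enough as in the proof: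
    (R : ℝ) (hR : 0 < R)
    (hRbig : ∃ γ' : ℝ, γ < γ' ∧ γ' < 1 ∧ 2 * C < (γ' - γ) * Real.exp (a / 2 * R ^ 2))
    -- i.i.d. uniform innovations on [0,1]:
    (eps : ℤ → Ω → ℝ) (hεm : ∀ t, Measurable (eps t))
    (hεi : iIndepFun eps P)
    (hεu : ∀ t, Measure.map (eps t) P = volume.restrict (Set.Icc (0 : ℝ) 1))
    -- the representation map `T` and its coupling property on the small set:
    (T : Ed m → Ed d → ℝ → Ed d)
    (hTm : Measurable (fun p : Ed m × Ed d × ℝ => T p.1 p.2.1 p.2.2))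
    (αR : ℝ) (hαR : αR ∈ Set.Ioo (0 : ℝ) 1)
    (hTrep : ∀ (y : Ed m) (θ : Ed d), ‖y‖ ≤ M →
      Measure.map (T y θ) (volume.restrict (Set.Icc (0 : ℝ) 1)) = kernelQ H lam y θ)
    (hTc : ∀ u : ℝ, 0 ≤ u → u ≤ αR → ∀ (y : Ed m) (θ₁ θ₂ : Ed d),
      ‖y‖ ≤ M → ‖θ₁‖ ≤ R → ‖θ₂‖ ≤ R → T y θ₁ u = T y θ₂ u) :
    ∃ κ : ℝ, 0 < κ ∧ ∃ N : ℕ, ∀ (θ₁ θ₂ : Ed d) (y : ℤ → Ed m),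
      (∀ k : ℤ, ‖y k‖ ≤ M) → ∀ n : ℕ, N ≤ n →
        (P {ω | Zproc T eps (fun k _ => y k) 0 (fun _ => θ₁) n ω
            ≠ Zproc T eps (fun k _ => y k) 0 (fun _ => θ₂) n ω}).toReal
          ≤ (Real.exp (a * ‖θ₁‖ ^ 2) + Real.exp (a * ‖θ₂‖ ^ 2) + 3) / 2
            * Real.exp (-κ * n) :=
  stmt10_general (mΩ := mΩ) P H M lam a γ C ha hγ hC hdrift R hR hRbig eps hεm hεi hεu T hTm αR hαR
    hTrep hTc
end
end

section
/- Under Assumption 1 with 0 < λ < Δ/K²: let m ∈ ℕ and let θ₁, θ₂ be ℝ^d-valued random variables independent of the σ-algebra F^ε_{m+1,∞} = σ(ε_t : t ≥ m+1), with E[V(θ₁)], E[V(θ₂)] < ∞. Then for all n ≥ N + m, P(Z_{m,n}^{θ₁,Y} ≠ Z_{m,n}^{θ₂,Y}) ≤ (E[V(θ₁)] + E[V(θ₂)] + 3)/2 · e^{−κ(n−m)}, where κ > 0 and N ∈ ℕ are the constants from the quenched coupling lemma and V(θ) = exp(a‖θ‖²) with a from the drift lemma. -/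
open MeasureTheory ProbabilityTheory Filter Real
open scoped RealInnerProductSpace ENNReal

noncomputable section

/-! Conditionally on the initial values and the data path `(θ₁, θ₂, Y)`, which are independent
of the innovations `ε_{t₀+1}, ε_{t₀+2}, …`, the two chains started at time `t₀` are driven by an
i.i.d. uniform sequence with the same law as `ε_1, ε_2, …`. By stationarity the data path is
almost surely bounded by `M`, so the quenched coupling bound applies to each fixed value of
`(θ₁, θ₂, Y)`, with the path shifted by `t₀`; integrating it against the law of `(θ₁, θ₂, Y)`
gives the annealed bound. -/

section IteratedMaps

variable {α β γ : Type*}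

def iterMap (T : β → α → γ → α) (y : ℕ → β) (e : ℕ → γ) (x : α) : ℕ → α
  | 0 => x
  | k + 1 => T (y k) (iterMap T y e x k) (e k)

def disagreeSet (T : β → α → γ → α) (t₀ k : ℕ) : Set ((α × α × (ℤ → β)) × (ℕ → γ)) :=
  {p | iterMap T (fun j => p.1.2.2 (t₀ + j)) p.2 p.1.1 k
    ≠ iterMap T (fun j => p.1.2.2 (t₀ + j)) p.2 p.1.2.1 k}

variable [MeasurableSpace α] [MeasurableSpace β] [MeasurableSpace γ] {T : β → α → γ → α}

lemma measurable_iterMap {δ : Type*} [MeasurableSpace δ]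
    (hT : Measurable (fun p : β × α × γ => T p.1 p.2.1 p.2.2))
    {y : δ → ℕ → β} {e : δ → ℕ → γ} {x : δ → α}
    (hy : ∀ j, Measurable fun a => y a j) (he : ∀ j, Measurable fun a => e a j)
    (hx : Measurable x) (k : ℕ) : Measurable fun a => iterMap T (y a) (e a) (x a) k := by
  induction k with
  | zero => exact hx
  | succ k ih => exact hT.comp ((hy k).prodMk (ih.prodMk (he k)))

lemma measurableSet_disagreeSet [MeasurableEq α]
    (hT : Measurable (fun p : β × α × γ => T p.1 p.2.1 p.2.2)) (t₀ k : ℕ) :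
    MeasurableSet (disagreeSet T t₀ k) := by
  have hy (j : ℕ) : Measurable fun p : (α × α × (ℤ → β)) × (ℕ → γ) => p.1.2.2 (t₀ + j) :=
    (measurable_pi_apply _).comp measurable_fst.snd.snd
  have he (j : ℕ) : Measurable fun p : (α × α × (ℤ → β)) × (ℕ → γ) => p.2 j :=
    (measurable_pi_apply j).comp measurable_snd
  exact (measurableSet_eq_fun (measurable_iterMap hT hy he measurable_fst.fst k)
    (measurable_iterMap hT hy he measurable_fst.snd.fst k)).compl

end IteratedMaps

section Zproc

variable {Ω : Type*} {d m : ℕ} (T : Ed m → Ed d → ℝ → Ed d) (eps : ℤ → Ω → ℝ)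

lemma Zproc_of_le (Y : ℤ → Ω → Ed m) (s : ℕ) (init : Ω → Ed d) {t : ℕ} (ht : t ≤ s)
    (ω : Ω) : Zproc T eps Y s init t ω = init ω := by
  cases t with
  | zero => rfl
  | succ t => simp only [Zproc, if_pos ht]

lemma Zproc_add_eq_iterMap (Y : ℤ → Ω → Ed m) (s : ℕ) (init : Ω → Ed d) (k : ℕ) (ω : Ω) :
    Zproc T eps Y s init (s + k) ω
      = iterMap T (fun j => Y (s + j) ω) (fun j => eps (s + j + 1) ω) (init ω) k := by
  induction k with
  | zero => exact Zproc_of_le T eps Y s init le_rfl ω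
  | succ k ih =>
    rw [← add_assoc]
    simp only [Zproc, if_neg (show ¬s + k + 1 ≤ s by omega), ih, iterMap]
    push_cast
    rfl

lemma setOf_Zproc_ne_eq_preimage (Y : ℤ → Ω → Ed m) (s : ℕ) (θ₁ θ₂ : Ω → Ed d) (k : ℕ) :
    {ω | Zproc T eps Y s θ₁ (s + k) ω ≠ Zproc T eps Y s θ₂ (s + k) ω}
      = (fun ω => ((θ₁ ω, θ₂ ω, fun t => Y t ω), fun j : ℕ => eps (s + j + 1) ω)) ⁻¹'
          disagreeSet T s k := by
  ext ω
  simp only [Zproc_add_eq_iterMap]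
  rfl

lemma setOf_Zproc_shift_ne_eq_preimage (γ : Ed d × Ed d × (ℤ → Ed m)) (t₀ k : ℕ) :
    {ω | Zproc T eps (fun t _ => γ.2.2 (t₀ + t)) 0 (fun _ => γ.1) k ω
        ≠ Zproc T eps (fun t _ => γ.2.2 (t₀ + t)) 0 (fun _ => γ.2.1) k ω}
      = (fun ω (j : ℕ) => eps (j + 1) ω) ⁻¹' (Prod.mk γ ⁻¹' disagreeSet T t₀ k) := by
  have hZ := Zproc_add_eq_iterMap T eps (fun t _ => γ.2.2 (t₀ + t)) 0
  simp only [zero_add, Nat.cast_zero] at hZ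
  ext ω
  simp only [hZ]
  rfl

end Zproc

section Probability

variable {Ω ι κ α β : Type*} {mΩ : MeasurableSpace Ω} [MeasurableSpace α] [MeasurableSpace β]
  {P : Measure Ω}

lemma map_eval_eq_of_map_shift_eq {Y : ℤ → Ω → β} (hY : ∀ t, Measurable (Y t))
    (hstat : P.map (fun ω t => Y (t + 1) ω) = P.map (fun ω t => Y t ω)) (t : ℤ) :
    P.map (Y t) = P.map (Y 0) := by
  have hstep : ∀ t : ℤ, P.map (Y (t + 1)) = P.map (Y t) := fun t => by
    have := congrArg (Measure.map fun f : ℤ → β => f t) hstat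
    rwa [Measure.map_map (measurable_pi_apply t) (measurable_pi_lambda _ fun t => hY _),
      Measure.map_map (measurable_pi_apply t) (measurable_pi_lambda _ hY)] at this
  induction t using Int.induction_on with
  | zero => rfl
  | succ i ih => rw [hstep i, ih]
  | pred i ih => rw [← ih, ← hstep (-i - 1)]; norm_num

lemma ae_forall_mem_of_map_shift_eq {Y : ℤ → Ω → β} (hY : ∀ t, Measurable (Y t))
    (hstat : P.map (fun ω t => Y (t + 1) ω) = P.map (fun ω t => Y t ω))
    {s : Set β} (hs : MeasurableSet s) (h0 : ∀ᵐ ω ∂P, Y 0 ω ∈ s) :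
    ∀ᵐ ω ∂P, ∀ t, Y t ω ∈ s := by
  refine ae_all_iff.mpr fun t => (ae_map_iff (hY t).aemeasurable hs).mp ?_
  rw [map_eval_eq_of_map_shift_eq hY hstat t]
  exact (ae_map_iff (hY 0).aemeasurable hs).mpr h0

lemma ProbabilityTheory.iIndepFun.map_reindex_eq {X : ι → Ω → β}
    (hX : ∀ i, Measurable (X i))
    (hind : iIndepFun X P) (hident : ∀ i j, P.map (X i) = P.map (X j))
    {g g' : κ → ι} (hg : g.Injective) (hg' : g'.Injective) :
    P.map (fun ω k => X (g k) ω) = P.map (fun ω k => X (g' k) ω) := by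
  have := hind.isProbabilityMeasure
  rw [(hind.precomp hg).map_fun_eq_infinitePi_map (fun k => hX _),
    (hind.precomp hg').map_fun_eq_infinitePi_map (fun k => hX _)]
  exact congrArg _ (funext fun k => hident _ _)

lemma ProbabilityTheory.Indep.indepFun_pi {X : Ω → α} {Z : ι → Ω → β} {p : ι → Prop}
    (h : Indep (MeasurableSpace.comap X inferInstance)
      (⨆ (i : ι) (_ : p i), MeasurableSpace.comap (Z i) inferInstance) P)
    {g : κ → ι} (hg : ∀ k, p (g k)) :
    IndepFun X (fun ω k => Z (g k) ω) P := by
  refine indep_of_indep_of_le_right h ?_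
  rw [MeasurableSpace.pi, MeasurableSpace.comap_iSup]
  refine iSup_le fun k => ?_
  rw [MeasurableSpace.comap_comp]
  exact le_iSup₂_of_le (f := fun i (_ : p i) => MeasurableSpace.comap (Z i) inferInstance)
    (g k) (hg k) le_rfl

lemma ProbabilityTheory.IndepFun.toReal_measure_preimage_le_integral [IsFiniteMeasure P]
    {X : Ω → α} {E : Ω → β} (hXE : IndepFun X E P) (hX : Measurable X) (hE : Measurable E)
    {S : Set (α × β)} (hS : MeasurableSet S) {f : Ω → ℝ} (hf0 : ∀ ω, 0 ≤ f ω)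
    (hf : Integrable f P)
    (hbound : ∀ᵐ ω ∂P, P.map E (Prod.mk (X ω) ⁻¹' S) ≤ ENNReal.ofReal (f ω)) :
    (P ((fun ω => (X ω, E ω)) ⁻¹' S)).toReal ≤ ∫ ω, f ω ∂P := by
  refine ENNReal.toReal_le_of_le_ofReal (integral_nonneg hf0) ?_
  calc P ((fun ω => (X ω, E ω)) ⁻¹' S)
      = ∫⁻ ω, P.map E (Prod.mk (X ω) ⁻¹' S) ∂P := by
        rw [← Measure.map_apply (hX.prodMk hE) hS,
          (indepFun_iff_map_prod_eq_prod_map_map hX.aemeasurable hE.aemeasurable).mp hXE,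
          Measure.prod_apply hS, lintegral_map (measurable_measure_prodMk_left hS) hX]
    _ ≤ ∫⁻ ω, ENNReal.ofReal (f ω) ∂P := lintegral_mono_ae hbound
    _ = ENNReal.ofReal (∫ ω, f ω ∂P) :=
        (ofReal_integral_eq_lintegral_ofReal hf (ae_of_all _ hf0)).symm

end Probability

theorem stmt11_general {Ω : Type*} {mΩ : MeasurableSpace Ω} (P : Measure Ω)
    [IsProbabilityMeasure P] {d m : ℕ}
    (M : ℝ) (a : ℝ)
    -- i.i.d. uniform innovations on [0,1], independent of the stationary data `Y`:
    (eps : ℤ → Ω → ℝ) (hεm : ∀ t, Measurable (eps t))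
    (hεi : iIndepFun eps P)
    (hεu : ∀ t, Measure.map (eps t) P = volume.restrict (Set.Icc (0 : ℝ) 1))
    (Y : ℤ → Ω → Ed m) (hYm : ∀ k, Measurable (Y k))
    (hYstat : Measure.map (fun ω (k : ℤ) => Y (k + 1) ω) P
      = Measure.map (fun ω (k : ℤ) => Y k ω) P)
    (hYb : ∀ᵐ ω ∂P, ‖Y 0 ω‖ ≤ M)
    -- the representation map `T`:
    (T : Ed m → Ed d → ℝ → Ed d)
    (hTm : Measurable (fun p : Ed m × Ed d × ℝ => T p.1 p.2.1 p.2.2))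
    -- the constants of the quenched coupling lemma:
    (κ : ℝ) (N : ℕ)
    (hquench : ∀ (x₁ x₂ : Ed d) (y : ℤ → Ed m), (∀ k : ℤ, ‖y k‖ ≤ M) →
      ∀ n : ℕ, N ≤ n →
        (P {ω | Zproc T eps (fun k _ => y k) 0 (fun _ => x₁) n ω
            ≠ Zproc T eps (fun k _ => y k) 0 (fun _ => x₂) n ω}).toReal
          ≤ (Real.exp (a * ‖x₁‖ ^ 2) + Real.exp (a * ‖x₂‖ ^ 2) + 3) / 2
            * Real.exp (-κ * n))
    -- the random initial values, independent of the future innovations: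
    (t₀ : ℕ) (θ₁ θ₂ : Ω → Ed d) (hθ₁m : Measurable θ₁) (hθ₂m : Measurable θ₂)
    (hindep : Indep
      (MeasurableSpace.comap (fun ω => (θ₁ ω, θ₂ ω, fun k : ℤ => Y k ω)) inferInstance)
      (⨆ (t : ℤ) (_ : (t₀ : ℤ) + 1 ≤ t), MeasurableSpace.comap (eps t) inferInstance) P)
    (hint₁ : Integrable (fun ω => Real.exp (a * ‖θ₁ ω‖ ^ 2)) P)
    (hint₂ : Integrable (fun ω => Real.exp (a * ‖θ₂ ω‖ ^ 2)) P) :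
    ∀ n : ℕ, N + t₀ ≤ n →
      (P {ω | Zproc T eps Y t₀ θ₁ n ω ≠ Zproc T eps Y t₀ θ₂ n ω}).toReal
        ≤ ((∫ ω, Real.exp (a * ‖θ₁ ω‖ ^ 2) ∂P)
            + (∫ ω, Real.exp (a * ‖θ₂ ω‖ ^ 2) ∂P) + 3) / 2
          * Real.exp (-κ * ((n : ℝ) - (t₀ : ℝ))) := by
  intro n hn
  obtain ⟨k, rfl⟩ : ∃ k, n = t₀ + k := ⟨n - t₀, by omega⟩
  let V : Ed d → ℝ := fun x => Real.exp (a * ‖x‖ ^ 2)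
  let E : Ω → ℕ → ℝ := fun ω j => eps (t₀ + j + 1) ω
  have hE : Measurable E := measurable_pi_lambda _ fun j => hεm _
  have hS := measurableSet_disagreeSet hTm t₀ k
  have hbdd : ∀ᵐ ω ∂P, ∀ t, ‖Y t ω‖ ≤ M :=
    ae_forall_mem_of_map_shift_eq hYm hYstat
      (measurableSet_le measurable_norm measurable_const) hYb
  have hlaw : P.map E = P.map fun ω (j : ℕ) => eps (j + 1) ω :=
    hεi.map_reindex_eq hεm (fun s t => by rw [hεu, hεu])
      (fun i j h => by simpa using h) (fun i j h => by simpa using h)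
  have hXE := hindep.indepFun_pi (g := fun j : ℕ => (t₀ + j + 1 : ℤ)) (fun j => by omega)
  have hsection : ∀ᵐ ω ∂P, P.map E (Prod.mk (θ₁ ω, θ₂ ω, fun t => Y t ω) ⁻¹' disagreeSet T t₀ k)
      ≤ ENNReal.ofReal ((V (θ₁ ω) + V (θ₂ ω) + 3) / 2 * Real.exp (-κ * k)) := by
    filter_upwards [hbdd] with ω hω
    rw [hlaw, Measure.map_apply (measurable_pi_lambda _ fun j => hεm _)
      (hS.preimage measurable_prodMk_left), ← setOf_Zproc_shift_ne_eq_preimage,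
      ENNReal.le_ofReal_iff_toReal_le (measure_ne_top _ _) (by positivity)]
    exact hquench _ _ (fun t => Y (t₀ + t) ω) (fun t => hω _) k (by omega)
  have hV : Integrable (fun ω => V (θ₁ ω) + V (θ₂ ω)) P := hint₁.add hint₂
  have hintegral : ∫ ω, (V (θ₁ ω) + V (θ₂ ω) + 3) / 2 * Real.exp (-κ * k) ∂P
      = ((∫ ω, V (θ₁ ω) ∂P) + (∫ ω, V (θ₂ ω) ∂P) + 3) / 2 * Real.exp (-κ * k) := by
    rw [integral_mul_const, integral_div, integral_add hV (integrable_const 3),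
      integral_add hint₁ hint₂, integral_const, probReal_univ, one_smul]
  rw [setOf_Zproc_ne_eq_preimage, show ((t₀ + k : ℕ) : ℝ) - t₀ = k by push_cast; ring,
    ← hintegral]
  exact hXE.toReal_measure_preimage_le_integral
    (hθ₁m.prodMk (hθ₂m.prodMk (measurable_pi_lambda _ hYm))) hE hS (fun ω => by positivity)
    (((hV.add (integrable_const 3)).div_const 2).mul_const _) hsection

/-- (Annealed coupling.) Under Assumption 1 with `0 < λ < Δ/K²`,
if `θ₁, θ₂` are random initial values, independent of `σ(ε_t : t ≥ m+1)`, with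
`E V(θᵢ) < ∞`, then for all `n ≥ N + m`,
`P(Z_{m,n}^{θ₁,Y} ≠ Z_{m,n}^{θ₂,Y}) ≤ (E V(θ₁) + E V(θ₂) + 3)/2 · e^{−κ(n−m)}`,
with `κ, N` the constants of the quenched coupling lemma, `V(θ) = exp(a‖θ‖²)`. -/
theorem stmt11 {Ω : Type*} {mΩ : MeasurableSpace Ω} (P : Measure Ω)
    [IsProbabilityMeasure P] {d m : ℕ}
    (H : Ed d → Ed m → Ed d) (hH : Measurable (Function.uncurry H))
    (Δ b K M : ℝ)
    (hΔ : 0 < Δ) (hb : 0 < b)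
    (hdis : ∀ (θ : Ed d) (y : Ed m), Δ * ‖θ‖ ^ 2 - b ≤ ⟪H θ y, θ⟫)
    (hK : Δ / Real.sqrt 2 < K)
    (hlin : ∀ (θ : Ed d) (y : Ed m), ‖H θ y‖ ≤ K * (‖θ‖ + ‖y‖ + 1))
    (hM : 0 < M)
    (lam : ℝ) (hlam : 0 < lam) (hlam2 : lam < Δ / K ^ 2)
    (a : ℝ) (ha : 0 < a)
    -- i.i.d. uniform innovations on [0,1], independent of the stationary data `Y`:
    (eps : ℤ → Ω → ℝ) (hεm : ∀ t, Measurable (eps t))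
    (hεi : iIndepFun eps P)
    (hεu : ∀ t, Measure.map (eps t) P = volume.restrict (Set.Icc (0 : ℝ) 1))
    (Y : ℤ → Ω → Ed m) (hYm : ∀ k, Measurable (Y k))
    (hYstat : Measure.map (fun ω (k : ℤ) => Y (k + 1) ω) P
      = Measure.map (fun ω (k : ℤ) => Y k ω) P)
    (hYb : ∀ᵐ ω ∂P, ‖Y 0 ω‖ ≤ M)
    (hYε : IndepFun (fun ω (t : ℤ) => eps t ω) (fun ω (k : ℤ) => Y k ω) P)
    -- the representation map `T`:
    (T : Ed m → Ed d → ℝ → Ed d)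
    (hTm : Measurable (fun p : Ed m × Ed d × ℝ => T p.1 p.2.1 p.2.2))
    (hTrep : ∀ (y : Ed m) (θ : Ed d), ‖y‖ ≤ M →
      Measure.map (T y θ) (volume.restrict (Set.Icc (0 : ℝ) 1)) = kernelQ H lam y θ)
    -- the constants of the quenched coupling lemma:
    (κ : ℝ) (hκ : 0 < κ) (N : ℕ)
    (hquench : ∀ (x₁ x₂ : Ed d) (y : ℤ → Ed m), (∀ k : ℤ, ‖y k‖ ≤ M) →
      ∀ n : ℕ, N ≤ n →
        (P {ω | Zproc T eps (fun k _ => y k) 0 (fun _ => x₁) n ω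
            ≠ Zproc T eps (fun k _ => y k) 0 (fun _ => x₂) n ω}).toReal
          ≤ (Real.exp (a * ‖x₁‖ ^ 2) + Real.exp (a * ‖x₂‖ ^ 2) + 3) / 2
            * Real.exp (-κ * n))
    -- the random initial values, independent of the future innovations:
    (t₀ : ℕ) (θ₁ θ₂ : Ω → Ed d) (hθ₁m : Measurable θ₁) (hθ₂m : Measurable θ₂)
    (hindep : Indep
      (MeasurableSpace.comap (fun ω => (θ₁ ω, θ₂ ω, fun k : ℤ => Y k ω)) inferInstance)
      (⨆ (t : ℤ) (_ : (t₀ : ℤ) + 1 ≤ t), MeasurableSpace.comap (eps t) inferInstance) P)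
    (hint₁ : Integrable (fun ω => Real.exp (a * ‖θ₁ ω‖ ^ 2)) P)
    (hint₂ : Integrable (fun ω => Real.exp (a * ‖θ₂ ω‖ ^ 2)) P) :
    ∀ n : ℕ, N + t₀ ≤ n →
      (P {ω | Zproc T eps Y t₀ θ₁ n ω ≠ Zproc T eps Y t₀ θ₂ n ω}).toReal
        ≤ ((∫ ω, Real.exp (a * ‖θ₁ ω‖ ^ 2) ∂P)
            + (∫ ω, Real.exp (a * ‖θ₂ ω‖ ^ 2) ∂P) + 3) / 2
          * Real.exp (-κ * ((n : ℝ) - (t₀ : ℝ))) :=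
  stmt11_general (mΩ := mΩ) P M a eps hεm hεi hεu Y hYm hYstat hYb T hTm κ N hquench t₀ θ₁ θ₂ hθ₁m
    hθ₂m hindep hint₁ hint₂
end
end

section
/- Let A₁, A₂, B₁, B₂ be sub-σ-algebras of F such that the σ-algebra A₁ ∨ B₁ is independent of A₂ ∨ B₂, and additionally A₂ is independent of B₂. Then α(A₁ ∨ A₂, B₁ ∨ B₂) = α(A₁, B₁). -/
open MeasureTheory ProbabilityTheory Filter Real
open scoped ENNReal

noncomputable section

/-- The α-measure of dependence between two sub-σ-algebras:
`α(G, H) = sup{|P(G ∩ H) − P(G)P(H)| : G ∈ G, H ∈ H}`. -/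
def alphaDep {Ω : Type*} {mΩ : MeasurableSpace Ω} (P : Measure Ω)
    (G H : MeasurableSpace Ω) : ℝ :=
  sSup {x : ℝ | ∃ A B : Set Ω, MeasurableSet[G] A ∧ MeasurableSet[H] B ∧
    x = |(P (A ∩ B)).toReal - (P A).toReal * (P B).toReal|}

/-! `α(A₁, B₁) ≤ α(A₁ ∨ A₂, B₁ ∨ B₂)` is monotonicity. Conversely, the unions `⋃ k, c k ∩ d k`
with `c k ∈ A₁` and `(d k)` a finite `A₂`-measurable partition form an algebra of sets generating
`A₁ ∨ A₂`, so they approximate every set of `A₁ ∨ A₂` in measure; likewise for `B₁ ∨ B₂`. The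
covariance `P(A ∩ B) − P(A)P(B)` is continuous under such approximations. For two such unions
`S`, `T`, the independence of `A₁ ∨ B₁` and `A₂ ∨ B₂` together with that of `A₂` and `B₂` factors
every probability, and `P(S ∩ T) − P(S)P(T) = ∑ₖₗ P(d k) P(f l) (P(c k ∩ e l) − P(c k) P(e l))`
is a convex combination of covariances of an `A₁`-event with a `B₁`-event. -/

open Set Function
open scoped symmDiff

section

variable {Ω : Type*} {mΩ : MeasurableSpace Ω} {P : Measure Ω}

lemma ProbabilityTheory.Indep.measureReal_inter {M₁ M₂ : MeasurableSpace Ω} {s t : Set Ω}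
    (h : Indep M₁ M₂ P) (hs : MeasurableSet[M₁] s) (ht : MeasurableSet[M₂] t) :
    P.real (s ∩ t) = P.real s * P.real t := by
  simp only [measureReal_def, (Indep_iff _ _ _).1 h s t hs ht, ENNReal.toReal_mul]

def eventCov (P : Measure Ω) (A B : Set Ω) : ℝ :=
  P.real (A ∩ B) - P.real A * P.real B

lemma abs_eventCov_le_one [IsProbabilityMeasure P] (A B : Set Ω) : |eventCov P A B| ≤ 1 :=
  Real.dist_eq _ _ ▸ Real.dist_le_of_mem_Icc_01 ⟨measureReal_nonneg, measureReal_le_one⟩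
    ⟨mul_nonneg measureReal_nonneg measureReal_nonneg,
      mul_le_one₀ measureReal_le_one measureReal_nonneg measureReal_le_one⟩

section alphaDep

variable {G H : MeasurableSpace Ω}

lemma abs_eventCov_le_alphaDep [IsProbabilityMeasure P] {A B : Set Ω}
    (hA : MeasurableSet[G] A) (hB : MeasurableSet[H] B) :
    |eventCov P A B| ≤ alphaDep P G H :=
  le_csSup ⟨1, by rintro _ ⟨A, B, -, -, rfl⟩; exact abs_eventCov_le_one A B⟩ ⟨A, B, hA, hB, rfl⟩

lemma alphaDep_nonneg : 0 ≤ alphaDep P G H :=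
  Real.sSup_nonneg fun _ ⟨_, _, _, _, hx⟩ => hx ▸ abs_nonneg _

lemma alphaDep_le {c : ℝ} (hc : 0 ≤ c)
    (h : ∀ A B, MeasurableSet[G] A → MeasurableSet[H] B → |eventCov P A B| ≤ c) :
    alphaDep P G H ≤ c :=
  Real.sSup_le (by rintro _ ⟨A, B, hA, hB, rfl⟩; exact h A B hA hB) hc

lemma alphaDep_mono [IsProbabilityMeasure P] {G' H' : MeasurableSpace Ω}
    (hG : G ≤ G') (hH : H ≤ H') : alphaDep P G H ≤ alphaDep P G' H' :=
  alphaDep_le alphaDep_nonneg fun _ _ hA hB => abs_eventCov_le_alphaDep (hG _ hA) (hH _ hB)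

end alphaDep

lemma abs_eventCov_sub_eventCov_le [IsProbabilityMeasure P] {A A' B B' : Set Ω}
    (hA : MeasurableSet A) (hA' : MeasurableSet A') (hB : MeasurableSet B)
    (hB' : MeasurableSet B') :
    |eventCov P A B - eventCov P A' B'| ≤ 2 * (P.real (A ∆ A') + P.real (B ∆ B')) := by
  have hinter : |P.real (A ∩ B) - P.real (A' ∩ B')| ≤ P.real (A ∆ A') + P.real (B ∆ B') :=
    calc |P.real (A ∩ B) - P.real (A' ∩ B')| ≤ P.real ((A ∩ B) ∆ (A' ∩ B')) :=
          abs_measureReal_sub_le_measureReal_symmDiff (hA.inter hB).nullMeasurableSet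
            (hA'.inter hB').nullMeasurableSet
      _ ≤ P.real (A ∆ A' ∪ B ∆ B') := measureReal_mono fun x => by
          simp only [mem_symmDiff, mem_union, mem_inter_iff]; tauto
      _ ≤ P.real (A ∆ A') + P.real (B ∆ B') := measureReal_union_le _ _
  have hdA := abs_measureReal_sub_le_measureReal_symmDiff (μ := P) hA.nullMeasurableSet
    hA'.nullMeasurableSet
  have hdB := abs_measureReal_sub_le_measureReal_symmDiff (μ := P) hB.nullMeasurableSet
    hB'.nullMeasurableSet
  have hprod : |P.real A * P.real B - P.real A' * P.real B'|
      ≤ P.real (A ∆ A') + P.real (B ∆ B') :=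
    calc |P.real A * P.real B - P.real A' * P.real B'|
        = |(P.real A - P.real A') * P.real B + P.real A' * (P.real B - P.real B')| := by ring_nf
      _ ≤ |P.real A - P.real A'| * 1 + 1 * |P.real B - P.real B'| := by
          refine (abs_add_le _ _).trans ?_
          rw [abs_mul, abs_mul, abs_of_nonneg measureReal_nonneg,
            abs_of_nonneg measureReal_nonneg]
          gcongr <;> exact measureReal_le_one
      _ ≤ P.real (A ∆ A') + P.real (B ∆ B') := by linarith
  calc |eventCov P A B - eventCov P A' B'|
      = |(P.real (A ∩ B) - P.real (A' ∩ B'))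
          - (P.real A * P.real B - P.real A' * P.real B')| := by unfold eventCov; ring_nf
    _ ≤ _ := (abs_sub _ _).trans (by linarith)

lemma alphaDep_le_of_approx [IsProbabilityMeasure P] {G H : MeasurableSpace Ω}
    (hG : G ≤ mΩ) (hH : H ≤ mΩ) {𝒜 ℬ : Set (Set Ω)}
    (h𝒜 : ∀ A, MeasurableSet[G] A → ∀ ε > 0, ∃ A' ∈ 𝒜, MeasurableSet[mΩ] A' ∧ P.real (A ∆ A') < ε)
    (hℬ : ∀ B, MeasurableSet[H] B → ∀ ε > 0, ∃ B' ∈ ℬ, MeasurableSet[mΩ] B' ∧ P.real (B ∆ B') < ε)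
    {c : ℝ} (hc : 0 ≤ c) (hcov : ∀ A ∈ 𝒜, ∀ B ∈ ℬ, |eventCov P A B| ≤ c) :
    alphaDep P G H ≤ c := by
  refine alphaDep_le hc fun A B hA hB => le_of_forall_pos_le_add fun ε hε => ?_
  obtain ⟨A', hA'𝒜, hA', hAA'⟩ := h𝒜 A hA (ε / 4) (by positivity)
  obtain ⟨B', hB'ℬ, hB', hBB'⟩ := hℬ B hB (ε / 4) (by positivity)
  have hclose := abs_eventCov_sub_eventCov_le (P := P) (hG _ hA) hA' (hH _ hB) hB'
  have := abs_sub_abs_le_abs_sub (eventCov P A B) (eventCov P A' B')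
  linarith [hcov A' hA'𝒜 B' hB'ℬ]

lemma mem_iUnion_inter_iff {ι : Type*} {c d : ι → Set Ω} (hd : Pairwise (Disjoint on d))
    {x : Ω} {k : ι} (hx : x ∈ d k) : x ∈ ⋃ l, c l ∩ d l ↔ x ∈ c k := by
  refine ⟨fun hxS => ?_, fun hxc => mem_iUnion.2 ⟨k, hxc, hx⟩⟩
  obtain ⟨l, hxc, hxd⟩ := mem_iUnion.1 hxS
  obtain rfl : l = k := hd.eq (not_disjoint_iff.2 ⟨x, hxd, hx⟩)
  exact hxc

lemma iUnion_inter_inter_iUnion_inter {ι κ : Type*} (c d : ι → Set Ω) (e f : κ → Set Ω) :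
    (⋃ k, c k ∩ d k) ∩ ⋃ l, e l ∩ f l = ⋃ p : ι × κ, (c p.1 ∩ e p.2) ∩ (d p.1 ∩ f p.2) := by
  simp only [iUnion_inter_iUnion, iUnion_prod', inter_inter_inter_comm]

lemma Pairwise.disjoint_inter_prod {ι κ : Type*} {d : ι → Set Ω} {f : κ → Set Ω}
    (hd : Pairwise (Disjoint on d)) (hf : Pairwise (Disjoint on f)) :
    Pairwise (Disjoint on fun p : ι × κ => d p.1 ∩ f p.2) := by
  rintro ⟨k, l⟩ ⟨k', l'⟩ hne
  by_cases hk : k = k'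
  · exact (hf fun hl => hne (Prod.ext hk hl)).mono inter_subset_right inter_subset_right
  · exact (hd hk).mono inter_subset_left inter_subset_left

section rectUnions

variable (M₁ M₂ : MeasurableSpace Ω)

def rectUnions : Set (Set Ω) :=
  {S | ∃ (ι : Type) (_ : Fintype ι) (c d : ι → Set Ω), (∀ k, MeasurableSet[M₁] (c k)) ∧
    (∀ k, MeasurableSet[M₂] (d k)) ∧ Pairwise (Disjoint on d) ∧ ⋃ k, d k = univ ∧
    S = ⋃ k, c k ∩ d k}

variable {M₁ M₂}

lemma rect_mem_rectUnions {a b : Set Ω} (ha : MeasurableSet[M₁] a) (hb : MeasurableSet[M₂] b) :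
    a ∩ b ∈ rectUnions M₁ M₂ := by
  refine ⟨Bool, inferInstance, fun i => cond i a ∅, fun i => cond i b bᶜ,
    Bool.forall_bool.2 ⟨@MeasurableSet.empty _ M₁, ha⟩, Bool.forall_bool.2 ⟨hb.compl, hb⟩, ?_, ?_,
    ?_⟩
  · rintro (_ | _) (_ | _) h
    all_goals first | exact absurd rfl h | exact disjoint_compl_left | exact disjoint_compl_right
  all_goals ext x; simp [Bool.exists_bool, em']

lemma rectUnions_inter {S T : Set Ω} (hS : S ∈ rectUnions M₁ M₂) (hT : T ∈ rectUnions M₁ M₂) :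
    S ∩ T ∈ rectUnions M₁ M₂ := by
  obtain ⟨ι, _, c, d, hc, hd, hdis, hcov, rfl⟩ := hS
  obtain ⟨κ, _, e, f, he, hf, hfdis, hfcov, rfl⟩ := hT
  refine ⟨ι × κ, inferInstance, fun p => c p.1 ∩ e p.2, fun p => d p.1 ∩ f p.2,
    fun p => (hc p.1).inter (he p.2), fun p => (hd p.1).inter (hf p.2),
    hdis.disjoint_inter_prod hfdis, ?_, iUnion_inter_inter_iUnion_inter c d e f⟩
  simp only [iUnion_prod', ← iUnion_inter_iUnion, hcov, hfcov, univ_inter]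

lemma rectUnions_compl {S : Set Ω} (hS : S ∈ rectUnions M₁ M₂) : Sᶜ ∈ rectUnions M₁ M₂ := by
  obtain ⟨ι, _, c, d, hc, hd, hdis, hcov, rfl⟩ := hS
  refine ⟨ι, inferInstance, fun k => (c k)ᶜ, d, fun k => (hc k).compl, hd, hdis, hcov, ?_⟩
  ext x
  obtain ⟨k, hxk⟩ := mem_iUnion.1 (hcov.symm ▸ mem_univ x)
  rw [mem_compl_iff, mem_iUnion_inter_iff hdis hxk, mem_iUnion_inter_iff hdis hxk, mem_compl_iff]

lemma isSetAlgebra_rectUnions : IsSetAlgebra (rectUnions M₁ M₂) where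
  empty_mem := empty_inter ∅ ▸ rect_mem_rectUnions (@MeasurableSet.empty _ M₁)
    (@MeasurableSet.empty _ M₂)
  compl_mem _ := rectUnions_compl
  union_mem s t hs ht := by
    rw [← compl_compl (s ∪ t), compl_union]
    exact rectUnions_compl (rectUnions_inter (rectUnions_compl hs) (rectUnions_compl ht))

lemma generateFrom_rectUnions : MeasurableSpace.generateFrom (rectUnions M₁ M₂) = M₁ ⊔ M₂ := by
  refine le_antisymm (MeasurableSpace.generateFrom_le fun S hS => ?_) (sup_le ?_ ?_)
  · obtain ⟨ι, _, c, d, hc, hd, -, -, rfl⟩ := hS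
    exact .iUnion fun k => (le_sup_left (b := M₂) _ (hc k)).inter (le_sup_right (a := M₁) _ (hd k))
  · intro a ha
    exact MeasurableSpace.measurableSet_generateFrom
      (inter_univ a ▸ rect_mem_rectUnions ha (@MeasurableSet.univ _ M₂))
  · intro b hb
    exact MeasurableSpace.measurableSet_generateFrom
      (univ_inter b ▸ rect_mem_rectUnions (@MeasurableSet.univ _ M₁) hb)

lemma exists_mem_rectUnions_measureReal_symmDiff_lt [IsFiniteMeasure P] (h₁ : M₁ ≤ mΩ)
    (h₂ : M₂ ≤ mΩ) {S : Set Ω} (hS : MeasurableSet[M₁ ⊔ M₂] S) {ε : ℝ} (hε : 0 < ε) :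
    ∃ T ∈ rectUnions M₁ M₂, MeasurableSet[mΩ] T ∧ P.real (S ∆ T) < ε := by
  have hle : M₁ ⊔ M₂ ≤ mΩ := sup_le h₁ h₂
  have hdense := Measure.MeasureDense.of_generateFrom_isSetAlgebra_finite (m := M₁ ⊔ M₂)
    (P.trim hle) isSetAlgebra_rectUnions generateFrom_rectUnions.symm
  obtain ⟨T, hT, hST⟩ := @Measure.MeasureDense.approx _ (M₁ ⊔ M₂) _ _ hdense S hS
    (measure_ne_top _ _) ε hε
  have hTm : MeasurableSet[M₁ ⊔ M₂] T := generateFrom_rectUnions ▸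
    MeasurableSpace.measurableSet_generateFrom hT
  rw [trim_measurableSet_eq hle (hS.symmDiff hTm)] at hST
  exact ⟨T, hT, hle _ hTm, ENNReal.toReal_lt_of_lt_ofReal hST⟩

end rectUnions

lemma measureReal_iUnion_inter_of_indep [IsFiniteMeasure P] {M₁ M₂ : MeasurableSpace Ω}
    (h₁ : M₁ ≤ mΩ) (h₂ : M₂ ≤ mΩ) (hind : Indep M₁ M₂ P) {ι : Type*} [Fintype ι]
    {c d : ι → Set Ω} (hc : ∀ k, MeasurableSet[M₁] (c k)) (hd : ∀ k, MeasurableSet[M₂] (d k))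
    (hdis : Pairwise (Disjoint on d)) :
    P.real (⋃ k, c k ∩ d k) = ∑ k, P.real (c k) * P.real (d k) := by
  rw [measureReal_iUnion_fintype
    (fun k l hkl => (hdis hkl).mono inter_subset_right inter_subset_right)
    (fun k => (h₁ _ (hc k)).inter (h₂ _ (hd k)))]
  exact Finset.sum_congr rfl fun k _ => hind.measureReal_inter (hc k) (hd k)

lemma sum_measureReal_eq_one [IsProbabilityMeasure P] {ι : Type*} [Fintype ι] {d : ι → Set Ω}
    (hd : ∀ k, MeasurableSet (d k)) (hdis : Pairwise (Disjoint on d)) (hcov : ⋃ k, d k = univ) :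
    ∑ k, P.real (d k) = 1 := by
  rw [← measureReal_iUnion_fintype hdis hd, hcov, probReal_univ]

lemma eventCov_iUnion_inter_iUnion_inter [IsFiniteMeasure P]
    {A₁ A₂ B₁ B₂ : MeasurableSpace Ω} (hA₁ : A₁ ≤ mΩ) (hA₂ : A₂ ≤ mΩ) (hB₁ : B₁ ≤ mΩ)
    (hB₂ : B₂ ≤ mΩ) (h12 : Indep (A₁ ⊔ B₁) (A₂ ⊔ B₂) P) (h22 : Indep A₂ B₂ P)
    {ι κ : Type*} [Fintype ι] [Fintype κ] {c d : ι → Set Ω} {e f : κ → Set Ω}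
    (hc : ∀ k, MeasurableSet[A₁] (c k)) (hd : ∀ k, MeasurableSet[A₂] (d k))
    (he : ∀ l, MeasurableSet[B₁] (e l)) (hf : ∀ l, MeasurableSet[B₂] (f l))
    (hdis : Pairwise (Disjoint on d)) (hfdis : Pairwise (Disjoint on f)) :
    eventCov P (⋃ k, c k ∩ d k) (⋃ l, e l ∩ f l)
      = ∑ k, ∑ l, P.real (d k) * P.real (f l) * eventCov P (c k) (e l) := by
  have h₁ : A₁ ⊔ B₁ ≤ mΩ := sup_le hA₁ hB₁
  have h₂ : A₂ ⊔ B₂ ≤ mΩ := sup_le hA₂ hB₂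
  have hc' k : MeasurableSet[A₁ ⊔ B₁] (c k) := le_sup_left (b := B₁) _ (hc k)
  have hd' k : MeasurableSet[A₂ ⊔ B₂] (d k) := le_sup_left (b := B₂) _ (hd k)
  have he' l : MeasurableSet[A₁ ⊔ B₁] (e l) := le_sup_right (a := A₁) _ (he l)
  have hf' l : MeasurableSet[A₂ ⊔ B₂] (f l) := le_sup_right (a := A₂) _ (hf l)
  have hPS := measureReal_iUnion_inter_of_indep h₁ h₂ h12 hc' hd' hdis
  have hPT := measureReal_iUnion_inter_of_indep h₁ h₂ h12 he' hf' hfdis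
  have hPST : P.real ((⋃ k, c k ∩ d k) ∩ ⋃ l, e l ∩ f l)
      = ∑ k, ∑ l, P.real (c k ∩ e l) * (P.real (d k) * P.real (f l)) := by
    rw [iUnion_inter_inter_iUnion_inter, measureReal_iUnion_inter_of_indep h₁ h₂ h12
      (fun p : ι × κ => (hc' p.1).inter (he' p.2)) (fun p : ι × κ => (hd' p.1).inter (hf' p.2))
      (hdis.disjoint_inter_prod hfdis), Fintype.sum_prod_type]
    simp only [h22.measureReal_inter (hd _) (hf _)]
  rw [eventCov, hPST, hPS, hPT, Finset.sum_mul_sum, ← Finset.sum_sub_distrib]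
  refine Finset.sum_congr rfl fun k _ => ?_
  rw [← Finset.sum_sub_distrib]
  exact Finset.sum_congr rfl fun l _ => by rw [eventCov]; ring

lemma abs_eventCov_le_of_mem_rectUnions [IsProbabilityMeasure P]
    {A₁ A₂ B₁ B₂ : MeasurableSpace Ω} (hA₁ : A₁ ≤ mΩ) (hA₂ : A₂ ≤ mΩ) (hB₁ : B₁ ≤ mΩ)
    (hB₂ : B₂ ≤ mΩ) (h12 : Indep (A₁ ⊔ B₁) (A₂ ⊔ B₂) P) (h22 : Indep A₂ B₂ P) {S T : Set Ω}
    (hS : S ∈ rectUnions A₁ A₂) (hT : T ∈ rectUnions B₁ B₂) :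
    |eventCov P S T| ≤ alphaDep P A₁ B₁ := by
  obtain ⟨ι, _, c, d, hc, hd, hdis, hdcov, rfl⟩ := hS
  obtain ⟨κ, _, e, f, he, hf, hfdis, hfcov, rfl⟩ := hT
  have hd1 := sum_measureReal_eq_one (P := P) (fun k => hA₂ _ (hd k)) hdis hdcov
  have hf1 := sum_measureReal_eq_one (P := P) (fun l => hB₂ _ (hf l)) hfdis hfcov
  rw [eventCov_iUnion_inter_iUnion_inter hA₁ hA₂ hB₁ hB₂ h12 h22 hc hd he hf hdis hfdis]
  calc |∑ k, ∑ l, P.real (d k) * P.real (f l) * eventCov P (c k) (e l)|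
      ≤ ∑ k, ∑ l, P.real (d k) * P.real (f l) * alphaDep P A₁ B₁ := by
        refine (Finset.abs_sum_le_sum_abs _ _).trans (Finset.sum_le_sum fun k _ => ?_)
        refine (Finset.abs_sum_le_sum_abs _ _).trans (Finset.sum_le_sum fun l _ => ?_)
        rw [abs_mul, abs_of_nonneg (by positivity)]
        exact mul_le_mul_of_nonneg_left (abs_eventCov_le_alphaDep (hc k) (he l)) (by positivity)
    _ = alphaDep P A₁ B₁ := by
        simp_rw [mul_assoc, ← Finset.mul_sum, ← Finset.sum_mul, hf1, one_mul, hd1, one_mul]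

end

/-- If `A₁ ∨ B₁` is independent of `A₂ ∨ B₂` and moreover `A₂` is
independent of `B₂`, then `α(A₁ ∨ A₂, B₁ ∨ B₂) = α(A₁, B₁)`. -/
theorem stmt12 {Ω : Type*} [mΩ : MeasurableSpace Ω] (P : Measure Ω)
    [IsProbabilityMeasure P]
    (A₁ A₂ B₁ B₂ : MeasurableSpace Ω)
    (hA₁ : A₁ ≤ mΩ) (hA₂ : A₂ ≤ mΩ) (hB₁ : B₁ ≤ mΩ) (hB₂ : B₂ ≤ mΩ)
    (h12 : Indep (A₁ ⊔ B₁) (A₂ ⊔ B₂) P)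
    (h22 : Indep A₂ B₂ P) :
    alphaDep P (A₁ ⊔ A₂) (B₁ ⊔ B₂) = alphaDep P A₁ B₁ := by
  refine le_antisymm ?_ (alphaDep_mono le_sup_left le_sup_left)
  exact alphaDep_le_of_approx (sup_le hA₁ hA₂) (sup_le hB₁ hB₂)
    (fun _ hS _ hε => exists_mem_rectUnions_measureReal_symmDiff_lt hA₁ hA₂ hS hε)
    (fun _ hT _ hε => exists_mem_rectUnions_measureReal_symmDiff_lt hB₁ hB₂ hT hε)
    alphaDep_nonneg fun _ hS _ hT =>
      abs_eventCov_le_of_mem_rectUnions hA₁ hA₂ hB₁ hB₂ h12 h22 hS hT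
end
end

section
/- Let H : ℝ^d × ℝ^m → ℝ^d satisfy Assumption 1 with constants Δ, b > 0, K > Δ/√2, and let M > 0. Then for every λ > 0, every θ ∈ ℝ^d and every y ∈ ℝ^m with ‖y‖ ≤ M, one has ‖θ − λH(θ, y)‖² ≤ (2K²λ² − 2Δλ + 1)‖θ‖² + 2(λb + λ²K²(1 + M)²). Moreover, if 0 < λ < Δ/K², then 0 < 2K²λ² − 2Δλ + 1 < 1. -/
open MeasureTheory ProbabilityTheory Filter Real
open scoped RealInnerProductSpace ENNReal

noncomputable section

/-- Under Assumption 1, the one-step contraction estimate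
`‖θ − λH(θ,y)‖² ≤ (2K²λ² − 2Δλ + 1)‖θ‖² + 2(λb + λ²K²(1+M)²)` holds for any `λ > 0`
and bounded data `‖y‖ ≤ M`; moreover for `0 < λ < Δ/K²` the coefficient
`2K²λ² − 2Δλ + 1` lies in `(0,1)`. -/
theorem stmt19 {d m : ℕ}
    (H : Ed d → Ed m → Ed d) (Δ b K M : ℝ)
    (hΔ : 0 < Δ) (hb : 0 < b)
    (hdis : ∀ (θ : Ed d) (y : Ed m), Δ * ‖θ‖ ^ 2 - b ≤ ⟪H θ y, θ⟫)
    (hK : Δ / Real.sqrt 2 < K)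
    (hlin : ∀ (θ : Ed d) (y : Ed m), ‖H θ y‖ ≤ K * (‖θ‖ + ‖y‖ + 1))
    (hM : 0 < M) :
    (∀ lam : ℝ, 0 < lam → ∀ (θ : Ed d) (y : Ed m), ‖y‖ ≤ M →
      ‖θ - lam • H θ y‖ ^ 2 ≤ (2 * K ^ 2 * lam ^ 2 - 2 * Δ * lam + 1) * ‖θ‖ ^ 2
        + 2 * (lam * b + lam ^ 2 * K ^ 2 * (1 + M) ^ 2)) ∧
    (∀ lam : ℝ, 0 < lam → lam < Δ / K ^ 2 →
      0 < 2 * K ^ 2 * lam ^ 2 - 2 * Δ * lam + 1 ∧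
        2 * K ^ 2 * lam ^ 2 - 2 * Δ * lam + 1 < 1) := by

  have hK0 : 0 < K := lt_of_le_of_lt (by positivity) hK
  have hΔ2 : Δ ^ 2 < 2 * K ^ 2 := by
    have h2 : (0:ℝ) < Real.sqrt 2 := by positivity
    have : Δ < Real.sqrt 2 * K := by
      rw [div_lt_iff₀ h2] at hK; linarith [hK]
    nlinarith [Real.sq_sqrt (by norm_num : (2:ℝ) ≥ 0), sq_nonneg (Real.sqrt 2 * K - Δ)]
  constructor
  · intro lam hlam θ y hy
    have hexp : ‖θ - lam • H θ y‖ ^ 2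
        = ‖θ‖ ^ 2 - 2 * lam * ⟪H θ y, θ⟫ + lam ^ 2 * ‖H θ y‖ ^ 2 := by
      rw [norm_sub_sq_real, norm_smul, real_inner_smul_right,
        real_inner_comm]
      simp [abs_of_pos hlam, mul_pow]
      ring
    rw [hexp]
    have hHle : ‖H θ y‖ ≤ K * (‖θ‖ + (1 + M)) := by
      refine le_trans (hlin θ y) ?_
      have := hy
      nlinarith [norm_nonneg y]
    have hH2 : ‖H θ y‖ ^ 2 ≤ 2 * K ^ 2 * (‖θ‖ ^ 2 + (1 + M) ^ 2) := by
      have h1 : ‖H θ y‖ ^ 2 ≤ (K * (‖θ‖ + (1 + M))) ^ 2 :=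
        pow_le_pow_left₀ (norm_nonneg _) hHle 2
      nlinarith [sq_nonneg (‖θ‖ - (1 + M))]
    have hd := hdis θ y
    nlinarith [sq_nonneg lam, mul_pos hlam hlam]
  · intro lam hlam hlam2
    have hlK : lam * K ^ 2 < Δ := by
      rw [lt_div_iff₀ (by positivity)] at hlam2; linarith
    constructor
    · nlinarith [sq_nonneg (2 * K ^ 2 * lam - Δ), sq_nonneg lam]
    · nlinarith
end
end
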